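/- arXiv:2408.02607 — 8 statements merged into one kernel-verified Lean document; each statement's English description precedes it below -/
import Mathlib

section
/- Let n ≥ 1 and K ⊆ {1,…,n}. (a) If n ∉ K then t·w_K = w_{K∪{n}}, and if n ∈ K then t·w_K = w_{K∖{n}}. (b) If 1 ≤ i ≤ n−1 with i ∉ K and i+1 ∈ K, then s_i·w_K = w_{(K∪{i})∖{i+1}}. (c) If 1 ≤ i ≤ n−1 with i ∈ K and i+1 ∉ K, then s_i·w_K = w_{(K∖{i})∪{i+1}}. -/
/-!
We have `c_n = t` and `c_k = s_k c_{k+1}` for `k < n`, and `s_i` commutes with `c_k` for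
`k ≥ i + 2`: `s_i` only moves `±i, ±(i+1)`, while `c_k` fixes every `x` with `|x| < k`.
Multiplying `w_K` on the left by `t` thus adds or cancels the leading factor `c_n`, and `s_i`
slides past the factors `c_k`, `k > i + 1`, to turn `c_{i+1}` into `c_i`. Part (c) follows
from part (b) because `s_i` is an involution.
-/

/-- The signed permutation `s_i` of `ℤ`, swapping `i ↔ i+1` and `-i ↔ -(i+1)`. -/
def sPerm (i : ℤ) : Equiv.Perm ℤ :=
  Equiv.swap i (i + 1) * Equiv.swap (-i) (-(i + 1))

/-- The permutation `t` of `ℤ`, swapping `n ↔ -n`. -/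
def tPerm (n : ℕ) : Equiv.Perm ℤ :=
  Equiv.swap (n : ℤ) (-(n : ℤ))

/-- `c_k = s_k s_{k+1} ⋯ s_{n-1} t`. -/
def cPerm (n k : ℕ) : Equiv.Perm ℤ :=
  (((List.range (n - k)).map (fun j => sPerm ((k : ℤ) + (j : ℤ)))).prod) * tPerm n

/-- `w_K`: product of the `c_k`, `k ∈ K`, in decreasing order of `k`. -/
def wPerm (n : ℕ) (K : Finset ℕ) : Equiv.Perm ℤ :=
  (((K.sort (· ≤ ·)).reverse).map (cPerm n)).prod

theorem sPerm_apply_of_natAbs_ne {i : ℕ} {x : ℤ} (h : x.natAbs ≠ i) (h' : x.natAbs ≠ i + 1) :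
    sPerm i x = x := by
  simp only [sPerm, Equiv.Perm.mul_apply, Equiv.swap_apply_def]
  split_ifs <;> omega

theorem sPerm_mul_self {i : ℤ} (hi : 0 < i) : sPerm i * sPerm i = 1 := by
  ext x
  simp only [sPerm, Equiv.Perm.mul_apply, Equiv.Perm.one_apply, Equiv.swap_apply_def]
  split_ifs <;> omega

theorem tPerm_mul_self (n : ℕ) : tPerm n * tPerm n = 1 :=
  Equiv.swap_mul_self _ _

-- The definition of `cPerm` reaches `List ℤ` through the monadic coercion of `List.range`.
theorem cPerm_eq_prod (n k : ℕ) :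
    cPerm n k = ((List.range (n - k)).map fun j : ℕ => sPerm (k + j)).prod * tPerm n := by
  simp only [cPerm, List.pure_def, List.bind_eq_flatMap, ← List.map_eq_flatMap, List.map_map,
    Function.comp_def]

theorem cPerm_self (n : ℕ) : cPerm n n = tPerm n := by
  simp [cPerm_eq_prod]

theorem cPerm_eq_sPerm_mul {n k : ℕ} (h : k < n) : cPerm n k = sPerm k * cPerm n (k + 1) := by
  obtain ⟨m, rfl⟩ := Nat.exists_eq_add_of_lt h
  rw [cPerm_eq_prod, cPerm_eq_prod, show k + m + 1 - k = m + 1 by omega,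
    show k + m + 1 - (k + 1) = m by omega, List.range_succ_eq_map]
  simp only [List.map_cons, List.map_map, List.prod_cons, mul_assoc, Function.comp_def,
    Nat.cast_zero, add_zero, Nat.cast_succ, add_assoc, add_comm (1 : ℤ)]

theorem cPerm_apply_of_natAbs_lt {n k : ℕ} (hk : k ≤ n) {x : ℤ} (hx : x.natAbs < k) :
    cPerm n k x = x := by
  induction h : n - k generalizing k with
  | zero =>
    rw [show k = n by omega, cPerm_self, tPerm, Equiv.swap_apply_of_ne_of_ne] <;> omega
  | succ m ih =>
    rw [cPerm_eq_sPerm_mul (by omega), Equiv.Perm.mul_apply, ih (by omega) (by omega) (by omega),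
      sPerm_apply_of_natAbs_ne] <;> omega

theorem Finset.sort_union_of_forall_lt {α : Type*} [LinearOrder α] {A B : Finset α}
    (h : ∀ b ∈ B, ∀ a ∈ A, b < a) : (A ∪ B).sort = B.sort ++ A.sort := by
  induction B using Finset.induction_on_min with
  | empty => simp
  | insert b B hbB ih =>
    have hb : ∀ x ∈ A ∪ B, b < x := by
      intro x hx
      rcases Finset.mem_union.mp hx with hx | hx
      · exact h b (Finset.mem_insert_self b B) x hx
      · exact hbB x hx
    rw [Finset.union_insert, Finset.sort_insert _ (fun x hx => (hb x hx).le)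
        (fun hmem => (hb b hmem).false),
      Finset.sort_insert _ (fun x hx => (hbB x hx).le) (fun hmem => (hbB b hmem).false),
      ih (fun x hx => h x (Finset.mem_insert_of_mem hx)), List.cons_append]

theorem wPerm_union (n : ℕ) {A B : Finset ℕ} (h : ∀ b ∈ B, ∀ a ∈ A, b < a) :
    wPerm n (A ∪ B) = wPerm n A * wPerm n B := by
  simp only [wPerm, Finset.sort_union_of_forall_lt h, List.reverse_append, List.map_append,
    List.prod_append]

theorem wPerm_insert (n : ℕ) {k : ℕ} {B : Finset ℕ} (h : ∀ b ∈ B, b < k) :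
    wPerm n (insert k B) = cPerm n k * wPerm n B := by
  rw [Finset.insert_eq, wPerm_union n (by simpa using h)]
  simp [wPerm]

theorem commute_sPerm_wPerm {n i : ℕ} {A : Finset ℕ} (hA : ∀ a ∈ A, i + 1 < a ∧ a ≤ n) :
    Commute (sPerm i) (wPerm n A) := by
  refine Commute.list_prod_right _ _ fun c hc => ?_
  obtain ⟨k, hk, rfl⟩ := List.mem_map.mp hc
  obtain ⟨hik, hkn⟩ := hA k ((Finset.mem_sort _).mp (List.mem_reverse.mp hk))
  refine Equiv.Perm.Disjoint.commute fun x => ?_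
  by_cases hx : x.natAbs < k
  · exact Or.inr (cPerm_apply_of_natAbs_lt hkn hx)
  · exact Or.inl (sPerm_apply_of_natAbs_ne (by omega) (by omega))

theorem sPerm_mul_wPerm_union_insert_succ {n i : ℕ} (hi : i < n) {A B : Finset ℕ}
    (hA : ∀ a ∈ A, i + 1 < a ∧ a ≤ n) (hB : ∀ b ∈ B, b < i) :
    sPerm i * wPerm n (A ∪ insert (i + 1) B) = wPerm n (A ∪ insert i B) := by
  have hAB : ∀ j ≤ i + 1, ∀ b ∈ insert j B, ∀ a ∈ A, b < a := by
    intro j hj b hb a ha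
    have := (hA a ha).1
    rcases Finset.mem_insert.mp hb with rfl | hb
    · omega
    · have := hB b hb
      omega
  rw [wPerm_union n (hAB _ le_rfl), wPerm_union n (hAB _ (by omega)),
    wPerm_insert n fun b hb => (hB b hb).trans (by omega), wPerm_insert n hB, ← mul_assoc,
    (commute_sPerm_wPerm hA).eq, mul_assoc, ← mul_assoc (sPerm i), ← cPerm_eq_sPerm_mul hi]

theorem sPerm_mul_wPerm_of_notMem_of_mem {n i : ℕ} (hi : i < n) {K : Finset ℕ}
    (hKn : ∀ k ∈ K, k ≤ n) (hiK : i ∉ K) (hsK : i + 1 ∈ K) :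
    sPerm i * wPerm n K = wPerm n (insert i (K.erase (i + 1))) := by
  have hK : K = K.filter (i + 1 < ·) ∪ insert (i + 1) (K.filter (· < i)) := by
    ext k
    simp only [Finset.mem_union, Finset.mem_insert, Finset.mem_filter]
    grind
  have hK' : insert i (K.erase (i + 1)) = K.filter (i + 1 < ·) ∪ insert i (K.filter (· < i)) := by
    ext k
    simp only [Finset.mem_union, Finset.mem_insert, Finset.mem_filter, Finset.mem_erase]
    grind
  rw [hK', ← sPerm_mul_wPerm_union_insert_succ hi, ← hK]
  · exact fun a ha => ⟨(Finset.mem_filter.mp ha).2, hKn a (Finset.mem_filter.mp ha).1⟩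
  · exact fun b hb => (Finset.mem_filter.mp hb).2

theorem stmt0_general (n : ℕ) (K : Finset ℕ) (hK : K ⊆ Finset.Icc 1 n) :
    ((n ∉ K → tPerm n * wPerm n K = wPerm n (insert n K)) ∧
      (n ∈ K → tPerm n * wPerm n K = wPerm n (K.erase n))) ∧
    (∀ i : ℕ, 1 ≤ i → i ≤ n - 1 → i ∉ K → i + 1 ∈ K →
      sPerm (i : ℤ) * wPerm n K = wPerm n (insert i (K.erase (i + 1)))) ∧
    (∀ i : ℕ, 1 ≤ i → i ≤ n - 1 → i ∈ K → i + 1 ∉ K →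
      sPerm (i : ℤ) * wPerm n K = wPerm n (insert (i + 1) (K.erase i))) := by
  have hKn : ∀ k ∈ K, k ≤ n := fun k hk => (Finset.mem_Icc.mp (hK hk)).2
  refine ⟨⟨fun hnK => ?_, fun hnK => ?_⟩, fun i _ hin hiK hsK => ?_, fun i hi hin hiK hsK => ?_⟩
  · rw [wPerm_insert n fun k hk => (hKn k hk).lt_of_ne (ne_of_mem_of_not_mem hk hnK), cPerm_self]
  · conv_lhs => rw [← Finset.insert_erase hnK]
    rw [wPerm_insert n fun k hk => (hKn k (Finset.mem_of_mem_erase hk)).lt_of_ne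
      (Finset.ne_of_mem_erase hk), cPerm_self, ← mul_assoc, tPerm_mul_self, one_mul]
  · exact sPerm_mul_wPerm_of_notMem_of_mem (by omega) hKn hiK hsK
  · have key := sPerm_mul_wPerm_of_notMem_of_mem (n := n) (K := insert (i + 1) (K.erase i))
      (by omega) ?_ (by simp) (Finset.mem_insert_self _ _)
    · rw [Finset.erase_insert (by simp [hsK]), Finset.insert_erase hiK] at key
      rw [← key, ← mul_assoc, sPerm_mul_self (by omega), one_mul]
    · simp only [Finset.mem_insert, Finset.mem_erase]
      rintro k (rfl | ⟨-, hk⟩)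
      · omega
      · exact hKn k hk

theorem stmt0 (n : ℕ) (hn : 1 ≤ n) (K : Finset ℕ) (hK : K ⊆ Finset.Icc 1 n) :
    ((n ∉ K → tPerm n * wPerm n K = wPerm n (insert n K)) ∧
      (n ∈ K → tPerm n * wPerm n K = wPerm n (K.erase n))) ∧
    (∀ i : ℕ, 1 ≤ i → i ≤ n - 1 → i ∉ K → i + 1 ∈ K →
      sPerm (i : ℤ) * wPerm n K = wPerm n (insert i (K.erase (i + 1)))) ∧
    (∀ i : ℕ, 1 ≤ i → i ≤ n - 1 → i ∈ K → i + 1 ∉ K →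
      sPerm (i : ℤ) * wPerm n K = wPerm n (insert (i + 1) (K.erase i))) :=
  stmt0_general n K hK
end

section
/- Let n ≥ 1 and K ⊆ {1,…,n}. Then the intersection of the image w_K({1,…,n}) with {1,…,n} equals {1,…,n} ∖ K; moreover K = {k ∈ {1,…,n} : there exists i with 1 ≤ i ≤ n and w_K(i) = −k}. -/
/-! Each `c_k` with `1 ≤ k ≤ n` fixes `±x` for `|x| < k`, shifts `k, …, n - 1` up by one and
sends `n` to `-k`, so `c_k` maps `[1, n]` onto `([1, n] \ {k}) ∪ {-k}`. Multiplying the `c_k`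
in decreasing order of `k` and inducting on the smallest element of `K`, the new factor `c_a`
acts first and the earlier factors fix `±a`, so `w_K` maps `[1, n]` onto
`([1, n] \ K) ∪ (-K)`. Both claims are read off from this. -/

open Equiv

def sChain (k : ℤ) (m : ℕ) : Perm ℤ :=
  ((List.range m).map fun j : ℕ => sPerm (k + j)).prod

-- `cPerm` ranges over `List.range (n - k)` pushed into `List ℤ` by the monadic coercion.
lemma cPerm_eq_sChain_mul (n k : ℕ) : cPerm n k = sChain k (n - k) * tPerm n := by
  simp only [cPerm, sChain, List.bind_eq_flatMap, List.pure_def, ← List.map_eq_flatMap,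
    List.map_map]
  rfl

lemma sChain_succ (k : ℤ) (m : ℕ) : sChain k (m + 1) = sPerm k * sChain (k + 1) m := by
  simp only [sChain, List.prod_range_succ', Nat.cast_zero, add_zero, Nat.cast_succ, add_assoc,
    add_comm (1 : ℤ)]

section sPerm

variable {i x : ℤ}

lemma sPerm_apply_of_abs_lt (hx : |x| < i) : sPerm i x = x := by
  rw [abs_lt] at hx
  simp only [sPerm, Perm.mul_apply, swap_apply_def]
  split_ifs <;> omega

lemma sPerm_apply_of_lt (hi : 0 < i) (hx : i + 1 < x) : sPerm i x = x := by
  simp only [sPerm, Perm.mul_apply, swap_apply_def]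
  split_ifs <;> omega

lemma sPerm_apply_self (hi : 0 < i) : sPerm i i = i + 1 := by
  simp only [sPerm, Perm.mul_apply, swap_apply_def]
  split_ifs <;> omega

lemma sPerm_apply_neg_add_one (hi : 0 < i) : sPerm i (-(i + 1)) = -i := by
  simp only [sPerm, Perm.mul_apply, swap_apply_def]
  split_ifs <;> omega

end sPerm

lemma sChain_apply_of_abs_lt {k x : ℤ} (m : ℕ) (hx : |x| < k) : sChain k m x = x := by
  induction m generalizing k with
  | zero => rfl
  | succ m ih =>
    rw [sChain_succ, Perm.mul_apply, ih (by omega), sPerm_apply_of_abs_lt hx]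

lemma sChain_apply_of_le_of_lt {k x : ℤ} {m : ℕ} (hk : 0 < k) (hkx : k ≤ x)
    (hxm : x < k + m) : sChain k m x = x + 1 := by
  induction m generalizing k with
  | zero => omega
  | succ m ih =>
    rw [sChain_succ, Perm.mul_apply]
    rcases hkx.eq_or_lt with rfl | hkx
    · rw [sChain_apply_of_abs_lt m (by rw [abs_lt]; omega), sPerm_apply_self hk]
    · rw [ih (by omega) (by omega) (by push_cast at hxm; omega), sPerm_apply_of_lt hk (by omega)]

lemma sChain_apply_neg_add {k : ℤ} (m : ℕ) (hk : 0 < k) : sChain k m (-(k + m)) = -k := by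
  induction m generalizing k with
  | zero => simp [sChain]
  | succ m ih =>
    rw [sChain_succ, Perm.mul_apply, show -(k + ↑(m + 1)) = -(k + 1 + m) by push_cast; ring,
      ih (by omega), sPerm_apply_neg_add_one hk]

section cPerm

variable {n k : ℕ}

lemma cPerm_apply_of_abs_lt (hkn : k ≤ n) {x : ℤ} (hx : |x| < k) : cPerm n k x = x := by
  have hxn : x ≠ n ∧ x ≠ -n := by rw [abs_lt] at hx; omega
  rw [cPerm_eq_sChain_mul, Perm.mul_apply, tPerm, swap_apply_of_ne_of_ne hxn.1 hxn.2,
    sChain_apply_of_abs_lt _ hx]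

lemma cPerm_apply_of_le_of_lt (hk : 1 ≤ k) {x : ℤ} (hkx : k ≤ x) (hxn : x < n) :
    cPerm n k x = x + 1 := by
  rw [cPerm_eq_sChain_mul, Perm.mul_apply, tPerm, swap_apply_of_ne_of_ne (by omega) (by omega),
    sChain_apply_of_le_of_lt (by omega) hkx (by omega)]

lemma cPerm_apply_self_right (hk : 1 ≤ k) (hkn : k ≤ n) : cPerm n k n = -k := by
  have := sChain_apply_neg_add (k := k) (n - k) (by omega)
  rw [Nat.cast_sub hkn, add_sub_cancel] at this
  rw [cPerm_eq_sChain_mul, Perm.mul_apply, tPerm, swap_apply_left, this]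

lemma cPerm_image_Icc (hk : 1 ≤ k) (hkn : k ≤ n) :
    cPerm n k '' Set.Icc (1 : ℤ) n = insert (-(k : ℤ)) (Set.Icc (1 : ℤ) n \ {(k : ℤ)}) := by
  ext y
  simp only [Set.mem_image, Set.mem_insert_iff, Set.mem_sdiff, Set.mem_Icc,
    Set.mem_singleton_iff]
  constructor
  · rintro ⟨x, ⟨hx1, hxn⟩, rfl⟩
    rcases lt_or_ge x k with hxk | hkx
    · rw [cPerm_apply_of_abs_lt hkn (by rw [abs_lt]; omega)]; omega
    rcases hxn.lt_or_eq with hxn | rfl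
    · rw [cPerm_apply_of_le_of_lt hk hkx hxn]; omega
    · exact Or.inl (cPerm_apply_self_right hk hkn)
  · rintro (rfl | ⟨⟨hy1, hyn⟩, hyk⟩)
    · exact ⟨n, ⟨by omega, le_rfl⟩, cPerm_apply_self_right hk hkn⟩
    rcases lt_or_gt_of_ne hyk with hyk | hky
    · exact ⟨y, ⟨hy1, hyn⟩, cPerm_apply_of_abs_lt hkn (by rw [abs_lt]; omega)⟩
    · refine ⟨y - 1, ⟨by omega, by omega⟩, ?_⟩
      rw [cPerm_apply_of_le_of_lt hk (by omega) (by omega), sub_add_cancel]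

end cPerm

section wPerm

variable {n : ℕ} {K : Finset ℕ}

lemma wPerm_insert_of_lt {a : ℕ} (ha : ∀ k ∈ K, a < k) :
    wPerm n (insert a K) = wPerm n K * cPerm n a := by
  rw [wPerm, wPerm, Finset.sort_insert _ (fun k hk => (ha k hk).le) (fun h => (ha a h).false)]
  simp

lemma wPerm_apply_of_abs_lt (hK : ∀ k ∈ K, k ≤ n) {x : ℤ} (hx : ∀ k ∈ K, |x| < k) :
    wPerm n K x = x := by
  show wPerm n K ∈ MulAction.stabilizer (Perm ℤ) x
  refine Subgroup.list_prod_mem _ fun c hc => ?_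
  obtain ⟨k, hk, rfl⟩ := List.mem_map.mp hc
  rw [List.mem_reverse, Finset.mem_sort] at hk
  exact cPerm_apply_of_abs_lt (hK k hk) (hx k hk)

theorem wPerm_image_Icc (hK : K ⊆ Finset.Icc 1 n) :
    wPerm n K '' Set.Icc (1 : ℤ) n =
      Set.Icc (1 : ℤ) n \ ((↑) '' (K : Set ℕ)) ∪ (fun k : ℕ => -(k : ℤ)) '' K := by
  induction K using Finset.induction_on_min with
  | empty => simp [wPerm]
  | insert a K hmin ih =>
    have hK' : K ⊆ Finset.Icc 1 n := (Finset.subset_insert a K).trans hK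
    obtain ⟨ha1, han⟩ := Finset.mem_Icc.mp (hK (Finset.mem_insert_self a K))
    have hfix : ∀ x : ℤ, |x| = a → wPerm n K x = x := fun x hx =>
      wPerm_apply_of_abs_lt (fun k hk => (Finset.mem_Icc.mp (hK' hk)).2)
        (fun k hk => by rw [hx]; exact_mod_cast hmin k hk)
    rw [wPerm_insert_of_lt hmin, Perm.coe_mul, Set.image_comp, cPerm_image_Icc ha1 han,
      Set.image_insert_eq, Set.image_sdiff (wPerm n K).injective, Set.image_singleton, ih hK',
      hfix _ (by simp), hfix _ (by simp)]
    ext y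
    simp only [Set.mem_insert_iff, Set.mem_union, Set.mem_sdiff, Set.mem_Icc, Set.mem_image,
      Finset.coe_insert, Set.mem_singleton_iff, Finset.mem_coe]
    have hneg : ∀ k : ℕ, -(k : ℤ) ≠ a := fun k => by omega
    grind

lemma exists_wPerm_apply_eq_neg_iff (hK : K ⊆ Finset.Icc 1 n) (k : ℕ) :
    (∃ i ∈ Finset.Icc 1 n, wPerm n K i = -(k : ℤ)) ↔ k ∈ K := by
  have hmem : -(k : ℤ) ∈ wPerm n K '' Set.Icc (1 : ℤ) n ↔ k ∈ K := by
    rw [wPerm_image_Icc hK]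
    refine ⟨?_, fun hk => Or.inr ⟨k, hk, rfl⟩⟩
    rintro (⟨⟨h, -⟩, -⟩ | ⟨j, hj, hjk⟩)
    · omega
    · rw [neg_inj, Nat.cast_inj] at hjk
      exact hjk ▸ hj
  have hIcc : Set.Icc (1 : ℤ) n = (↑) '' (Finset.Icc 1 n : Set ℕ) := by
    rw [Finset.coe_Icc, Nat.image_cast_int_Icc, Nat.cast_one]
  rw [← hmem, hIcc, ← Set.image_comp]
  simp only [Set.mem_image, Finset.mem_coe, Function.comp_apply]

lemma wPerm_image_Icc_inter_Icc (hK : K ⊆ Finset.Icc 1 n) :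
    wPerm n K '' Set.Icc (1 : ℤ) n ∩ Set.Icc (1 : ℤ) n =
      (fun k : ℕ => (k : ℤ)) '' ↑(Finset.Icc 1 n \ K) := by
  have hdisj : Disjoint ((fun k : ℕ => -(k : ℤ)) '' K) (Set.Icc (1 : ℤ) n) := by
    rw [Set.disjoint_left]
    rintro _ ⟨k, -, rfl⟩ ⟨h, -⟩
    dsimp only at h
    omega
  rw [wPerm_image_Icc hK, Set.union_inter_distrib_right, hdisj.inter_eq, Set.union_empty,
    Set.inter_eq_left.mpr Set.sdiff_subset, Finset.coe_sdiff, Finset.coe_Icc,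
    Set.image_sdiff Nat.cast_injective, Nat.image_cast_int_Icc, Nat.cast_one]

end wPerm

theorem stmt2_general (n : ℕ) (K : Finset ℕ) (hK : K ⊆ Finset.Icc 1 n) :
    ((fun x => wPerm n K x) '' Set.Icc (1 : ℤ) (n : ℤ)) ∩ Set.Icc (1 : ℤ) (n : ℤ)
        = (fun k : ℕ => (k : ℤ)) '' ↑(Finset.Icc 1 n \ K) ∧
    (↑K : Set ℕ)
        = {k : ℕ | k ∈ Finset.Icc 1 n ∧ ∃ i ∈ Finset.Icc 1 n, wPerm n K (i : ℤ) = -(k : ℤ)} := by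
  refine ⟨wPerm_image_Icc_inter_Icc hK, Set.ext fun k => ?_⟩
  rw [Set.mem_ofPred_eq, Finset.mem_coe, exists_wPerm_apply_eq_neg_iff hK]
  exact ⟨fun hk => ⟨hK hk, hk⟩, And.right⟩

theorem stmt2 (n : ℕ) (hn : 1 ≤ n) (K : Finset ℕ) (hK : K ⊆ Finset.Icc 1 n) :
    ((fun x => wPerm n K x) '' Set.Icc (1 : ℤ) (n : ℤ)) ∩ Set.Icc (1 : ℤ) (n : ℤ)
        = (fun k : ℕ => (k : ℤ)) '' ↑(Finset.Icc 1 n \ K) ∧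
    (↑K : Set ℕ)
        = {k : ℕ | k ∈ Finset.Icc 1 n ∧ ∃ i ∈ Finset.Icc 1 n, wPerm n K (i : ℤ) = -(k : ℤ)} :=
  stmt2_general n K hK
end

section
/- Let n ≥ 1, let k, l be integers with 0 ≤ k ≤ l ≤ n, and let I_{k,l} ⊆ ℝⁿ × ℝⁿ be the subspace spanned by (e_i, 0) for 1 ≤ i ≤ n−l, (e_i, e_i) for n−l < i ≤ n−k, and (0, e_i) for n−k < i ≤ n. For g ∈ GLₙ(ℝ), one has {(g a, (gᵀ)⁻¹ c) : (a,c) ∈ I_{k,l}} = I_{k,l} if and only if g_{ij} = 0 whenever (j ≤ n−l and i > n−l) or (j ≤ n−k and i > n−k), and the (l−k)×(l−k) submatrix (g_{ij})_{n−l < i ≤ n−k, n−l < j ≤ n−k} is an orthogonal matrix. -/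
/-! Let `b i ∈ {0, 1, 2}` be the block of the index `i` (`blockIdx`). Then `I_{k,l}` is the direct
sum of the lines `ℓ_{b i} • eᵢ`, where `ℓ₀ = ℝ × 0`, `ℓ₁` is the diagonal and `ℓ₂ = 0 × ℝ`.
The twist map `(a, c) ↦ (g a, h c)`, `h = (gᵀ)⁻¹`, is injective, so it preserves `I_{k,l}` iff it
sends every generator into `I_{k,l}`. Read entrywise, this says that `g` is block upper triangular,
`h` is block lower triangular, and `g` and `h` agree on the middle diagonal block. The condition on
`h` follows from the one on `g`; the cross terms of `gᵀ h = 1` then vanish on the middle block, so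
the middle block `H` of `h` is the inverse of `Bᵀ`, `B` the middle block of `g`, and `H = B` iff
`B Bᵀ = 1`. -/

open Matrix

/-- `ℝ^{2n} = ℝⁿ × ℝⁿ`. -/
abbrev SympV (n : ℕ) := (Fin n → ℝ) × (Fin n → ℝ)

/-- The symplectic form `Ω((a,c),(a',c')) = ⟨a,c'⟩ - ⟨c,a'⟩`. -/
def sympForm (n : ℕ) (u v : SympV n) : ℝ := u.1 ⬝ᵥ v.2 - u.2 ⬝ᵥ v.1

/-- A Lagrangian subspace: `n`-dimensional and isotropic for `Ω`. -/
def IsLagrangian (n : ℕ) (F : Submodule ℝ (SympV n)) : Prop :=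
  Module.finrank ℝ F = n ∧ ∀ u ∈ F, ∀ v ∈ F, sympForm n u v = 0

/-- Theta nonnegativity: `⟨a,c⟩ ≥ 0` for every `(a,c) ∈ F`. -/
def ThetaNonneg (n : ℕ) (F : Submodule ℝ (SympV n)) : Prop :=
  ∀ p ∈ F, 0 ≤ p.1 ⬝ᵥ p.2

/-- The generators of the base point `I_{k,l}`: `(e_i,0)` for `i ≤ n-l` (1-based),
`(e_i,e_i)` for `n-l < i ≤ n-k`, and `(0,e_i)` for `n-k < i ≤ n`. -/
def stdGen (n k l : ℕ) (i : Fin n) : SympV n :=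
  if (i : ℕ) < n - l then (Pi.single i 1, 0)
  else if (i : ℕ) < n - k then (Pi.single i 1, Pi.single i 1)
  else (0, Pi.single i 1)

/-- The subspace `I_{k,l}`. -/
def Ikl (n k l : ℕ) : Submodule ℝ (SympV n) := Submodule.span ℝ (Set.range (stdGen n k l))

/-- The action of `g ∈ GLₙ(ℝ)`: `(a,c) ↦ (g a, (gᵀ)⁻¹ c)`. -/
noncomputable def twistMap (n : ℕ) (g : Matrix (Fin n) (Fin n) ℝ) :
    SympV n →ₗ[ℝ] SympV n :=
  LinearMap.prodMap (Matrix.mulVecLin g) (Matrix.mulVecLin gᵀ⁻¹)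

theorem Submodule.map_eq_self_iff_map_le {K V : Type*} [DivisionRing K] [AddCommGroup V]
    [Module K V] [FiniteDimensional K V] {f : V →ₗ[K] V} (hf : Function.Injective f)
    (W : Submodule K V) : W.map f = W ↔ W.map f ≤ W :=
  ⟨le_of_eq, fun h => Submodule.eq_of_le_of_finrank_eq h
    (LinearEquiv.finrank_eq (Submodule.equivMapOfInjective f hf W)).symm⟩

theorem Matrix.submatrix_mul_submatrix_of_forall_notMem_range {m ι κ ν R : Type*} [Fintype m]
    [Fintype κ] [NonUnitalNonAssocSemiring R] (A C : Matrix m m R)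
    {e₁ : ι → m} {e₂ : κ → m} {e₃ : ν → m} (he₂ : Function.Injective e₂)
    (hzero : ∀ p q t, t ∉ Set.range e₂ → A (e₁ p) t * C t (e₃ q) = 0) :
    A.submatrix e₁ e₂ * C.submatrix e₂ e₃ = (A * C).submatrix e₁ e₃ := by
  classical
  ext p q
  exact Finset.sum_of_injOn e₂ he₂.injOn (by simp) (fun t _ ht => hzero p q t (by simpa using ht))
    (fun _ _ => rfl)

theorem Matrix.blockTriangular_inv_transpose {m α K : Type*} [Fintype m] [DecidableEq m]
    [LinearOrder α] [Field K] {g : Matrix m m K} {b : m → α} (hg : IsUnit g.det)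
    (hgb : g.BlockTriangular b) : gᵀ⁻¹.BlockTriangular (OrderDual.toDual ∘ b) :=
  have : Invertible gᵀ := gᵀ.invertibleOfIsUnitDet (by rwa [det_transpose])
  blockTriangular_inv_of_blockTriangular hgb.transpose

-- Row `i` (block `a`) of the image of the `j`-th generator (block `b`) under `(g, h)`.
theorem block_entry_conditions_iff {a b : ℕ} (ha : a ≤ 2) (hb : b ≤ 2) (u v : ℝ) :
    ((a = 0 → (if 1 ≤ b then v else 0) = 0) ∧
      (a = 1 → (if b ≤ 1 then u else 0) = if 1 ≤ b then v else 0) ∧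
      (a = 2 → (if b ≤ 1 then u else 0) = 0)) ↔
    ((b < a → u = 0) ∧ (a < b → v = 0) ∧ (a = 1 → b = 1 → v = u)) := by
  interval_cases a <;> interval_cases b <;> simp [eq_comm]

def blockIdx (n k l : ℕ) (i : Fin n) : ℕ :=
  if (i : ℕ) < n - l then 0 else if (i : ℕ) < n - k then 1 else 2

def midIdx (n k l : ℕ) (hln : l ≤ n) (p : Fin (l - k)) : Fin n :=
  ⟨n - l + (p : ℕ), by have := p.isLt; omega⟩

section

variable {n k l : ℕ}

theorem blockIdx_le_two (i : Fin n) : blockIdx n k l i ≤ 2 := by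
  unfold blockIdx; split_ifs <;> omega

theorem blockTriangular_blockIdx_iff (hkl : k ≤ l) (g : Matrix (Fin n) (Fin n) ℝ) :
    g.BlockTriangular (blockIdx n k l) ↔ ∀ i j : Fin n,
      (((j : ℕ) < n - l ∧ n - l ≤ (i : ℕ)) ∨ ((j : ℕ) < n - k ∧ n - k ≤ (i : ℕ))) → g i j = 0 := by
  have hlt : ∀ i j : Fin n, blockIdx n k l j < blockIdx n k l i ↔
      (((j : ℕ) < n - l ∧ n - l ≤ (i : ℕ)) ∨ ((j : ℕ) < n - k ∧ n - k ≤ (i : ℕ))) := by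
    intro i j
    unfold blockIdx
    split_ifs <;> omega
  simp only [BlockTriangular, ← hlt]

theorem midIdx_injective (hln : l ≤ n) : Function.Injective (midIdx n k l hln) :=
  fun p q hpq => Fin.ext (by simpa [midIdx] using congrArg Fin.val hpq)

theorem blockIdx_eq_one_iff (hln : l ≤ n) (i : Fin n) :
    blockIdx n k l i = 1 ↔ i ∈ Set.range (midIdx n k l hln) := by
  constructor
  · intro hi
    have : n - l ≤ i ∧ i < n - k := by unfold blockIdx at hi; split_ifs at hi <;> omega
    exact ⟨⟨i - (n - l), by omega⟩, Fin.ext (by simp [midIdx]; omega)⟩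
  · rintro ⟨p, rfl⟩
    have := p.isLt
    unfold blockIdx midIdx
    split_ifs <;> simp_all; omega

theorem stdGen_eq (i : Fin n) :
    stdGen n k l i = (Pi.single i (if blockIdx n k l i ≤ 1 then 1 else 0),
      Pi.single i (if 1 ≤ blockIdx n k l i then 1 else 0)) := by
  unfold stdGen blockIdx; split_ifs <;> simp_all

theorem sum_smul_stdGen (x : Fin n → ℝ) :
    ∑ i, x i • stdGen n k l i = (fun j => if blockIdx n k l j ≤ 1 then x j else 0,
      fun j => if 1 ≤ blockIdx n k l j then x j else 0) := by
  simp only [stdGen_eq, Prod.smul_mk, ← Pi.single_smul, smul_eq_mul, mul_ite, mul_one, mul_zero,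
    ← prod_mk_sum, Finset.univ_sum_single]

theorem mem_Ikl_iff {p : SympV n} :
    p ∈ Ikl n k l ↔ ∀ i, (blockIdx n k l i = 0 → p.2 i = 0) ∧
      (blockIdx n k l i = 1 → p.1 i = p.2 i) ∧ (blockIdx n k l i = 2 → p.1 i = 0) := by
  constructor
  · intro hp
    induction hp using Submodule.span_induction with
    | mem _ hx =>
      obtain ⟨j, rfl⟩ := hx
      intro i
      rcases eq_or_ne i j with rfl | hij
      · have := blockIdx_le_two (k := k) (l := l) i
        simp only [stdGen_eq, Pi.single_eq_same]
        generalize blockIdx n k l i = b at *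
        interval_cases b <;> simp
      · simp [stdGen_eq, Pi.single_eq_of_ne hij]
    | zero => simp
    | add x y _ _ hx hy => intro i; simp_all
    | smul a x _ hx => intro i; simp_all
  · intro hp
    have hsum : ∑ i, (if blockIdx n k l i ≤ 1 then p.1 i else p.2 i) • stdGen n k l i = p := by
      rw [sum_smul_stdGen]
      ext j
      all_goals
        obtain ⟨h₀, h₁, h₂⟩ := hp j
        have := blockIdx_le_two (k := k) (l := l) j
        dsimp only
        generalize blockIdx n k l j = b at *
        interval_cases b <;> simp_all
    rw [← hsum]
    exact Submodule.sum_mem _ fun i _ => Submodule.smul_mem _ _ (Submodule.subset_span ⟨i, rfl⟩)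

theorem prodMap_mulVecLin_stdGen (g h : Matrix (Fin n) (Fin n) ℝ) (j : Fin n) :
    (mulVecLin g).prodMap (mulVecLin h) (stdGen n k l j) =
      (if blockIdx n k l j ≤ 1 then g.col j else 0, if 1 ≤ blockIdx n k l j then h.col j else 0) := by
  rw [stdGen_eq, LinearMap.prodMap_apply]
  split_ifs <;> simp

theorem map_prodMap_mulVecLin_le_Ikl_iff (hln : l ≤ n) (g h : Matrix (Fin n) (Fin n) ℝ) :
    (Ikl n k l).map ((mulVecLin g).prodMap (mulVecLin h)) ≤ Ikl n k l ↔
      g.BlockTriangular (blockIdx n k l) ∧ h.BlockTriangular (OrderDual.toDual ∘ blockIdx n k l) ∧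
      h.submatrix (midIdx n k l hln) (midIdx n k l hln) =
        g.submatrix (midIdx n k l hln) (midIdx n k l hln) := by
  have hmid : (∀ i j, blockIdx n k l i = 1 → blockIdx n k l j = 1 → h i j = g i j) ↔
      h.submatrix (midIdx n k l hln) (midIdx n k l hln) =
        g.submatrix (midIdx n k l hln) (midIdx n k l hln) := by
    constructor
    · intro H
      ext p q
      exact H _ _ ((blockIdx_eq_one_iff hln _).2 ⟨p, rfl⟩) ((blockIdx_eq_one_iff hln _).2 ⟨q, rfl⟩)
    · rintro H i j hi hj
      obtain ⟨p, rfl⟩ := (blockIdx_eq_one_iff hln i).1 hi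
      obtain ⟨q, rfl⟩ := (blockIdx_eq_one_iff hln j).1 hj
      exact congrFun (congrFun H p) q
  rw [Submodule.map_le_iff_le_comap]
  nth_rw 1 [Ikl]
  rw [Submodule.span_le, Set.range_subset_iff, ← hmid]
  simp only [SetLike.mem_coe, Submodule.mem_comap, mem_Ikl_iff, prodMap_mulVecLin_stdGen, ite_apply,
    col_apply, Pi.zero_apply, block_entry_conditions_iff, blockIdx_le_two]
  exact ⟨fun H => ⟨fun i j hij => (H j i).1 hij, fun i j hij => (H j i).2.1 hij,
    fun i j => (H j i).2.2⟩, fun ⟨H₁, H₂, H₃⟩ j i => ⟨fun hij => H₁ hij, fun hij => H₂ hij, H₃ i j⟩⟩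

theorem transpose_submatrix_midIdx_mul_inv (hln : l ≤ n) {g : Matrix (Fin n) (Fin n) ℝ}
    (hg : IsUnit g.det) (hgb : g.BlockTriangular (blockIdx n k l)) :
    (g.submatrix (midIdx n k l hln) (midIdx n k l hln))ᵀ *
      gᵀ⁻¹.submatrix (midIdx n k l hln) (midIdx n k l hln) = 1 := by
  rw [transpose_submatrix,
    submatrix_mul_submatrix_of_forall_notMem_range _ _ (midIdx_injective hln),
    mul_nonsing_inv _ (by rwa [det_transpose]), submatrix_one _ (midIdx_injective hln)]
  intro p q t ht
  have hp := (blockIdx_eq_one_iff hln _).2 ⟨p, rfl⟩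
  have hq := (blockIdx_eq_one_iff hln _).2 ⟨q, rfl⟩
  rcases Nat.lt_or_gt_of_ne ((blockIdx_eq_one_iff hln t).not.2 ht) with ht₀ | ht₂
  · rw [blockTriangular_inv_transpose hg hgb
      (show blockIdx n k l t < blockIdx n k l (midIdx n k l hln q) by omega), mul_zero]
  · rw [transpose_apply, hgb (show blockIdx n k l (midIdx n k l hln p) < blockIdx n k l t by omega),
      zero_mul]

end

theorem stmt7 (n k l : ℕ) (hkl : k ≤ l) (hln : l ≤ n)
    (g : Matrix (Fin n) (Fin n) ℝ) (hg : IsUnit g.det) :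
    (Ikl n k l).map (twistMap n g) = Ikl n k l ↔
      ((∀ i j : Fin n,
          (((j : ℕ) < n - l ∧ n - l ≤ (i : ℕ)) ∨ ((j : ℕ) < n - k ∧ n - k ≤ (i : ℕ))) →
          g i j = 0) ∧
        (Matrix.of fun p q : Fin (l - k) =>
            g ⟨n - l + (p : ℕ), by have := p.isLt; omega⟩
              ⟨n - l + (q : ℕ), by have := q.isLt; omega⟩) *
        (Matrix.of fun p q : Fin (l - k) =>
            g ⟨n - l + (p : ℕ), by have := p.isLt; omega⟩
              ⟨n - l + (q : ℕ), by have := q.isLt; omega⟩)ᵀ = 1) := by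
  set B := g.submatrix (midIdx n k l hln) (midIdx n k l hln)
  set H := gᵀ⁻¹.submatrix (midIdx n k l hln) (midIdx n k l hln)
  change _ ↔ _ ∧ B * Bᵀ = 1
  have hgU : IsUnit g := (isUnit_iff_isUnit_det g).2 hg
  have hinj : Function.Injective (twistMap n g) :=
    (mulVec_injective_iff_isUnit.2 hgU).prodMap
      (mulVec_injective_iff_isUnit.2 (isUnit_nonsing_inv_iff.2 (g.isUnit_transpose.2 hgU)))
  rw [Submodule.map_eq_self_iff_map_le hinj, twistMap, map_prodMap_mulVecLin_le_Ikl_iff hln,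
    ← blockTriangular_blockIdx_iff hkl, and_congr_right_iff]
  intro hgb
  rw [and_iff_right (blockTriangular_inv_transpose hg hgb)]
  change H = B ↔ B * Bᵀ = 1
  have hBH : Bᵀ * H = 1 := transpose_submatrix_midIdx_mul_inv hln hg hgb
  constructor
  · intro hHB
    rw [hHB] at hBH
    exact mul_eq_one_comm.mp hBH
  · intro hBBt
    calc H = B * Bᵀ * H := by rw [hBBt, one_mul]
      _ = B := by rw [Matrix.mul_assoc, hBH, mul_one]
end

section
/- Let n ≥ 1. For every symmetric positive semi-definite n×n real matrix S there exist a unique subset K ⊆ {1,…,n} and a unique matrix A ∈ M_K such that S = A Aᵀ. In particular, the map A ↦ A Aᵀ from the disjoint union of the sets M_K over K ⊆ {1,…,n} to the symmetric matrices is injective with image exactly the set of symmetric positive semi-definite matrices. -/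
/-!
Induction on `n`, peeling off the first row and column. If `A = [[a, 0], [c, B]]` then
`A Aᵀ = [[a², a cᵀ], [a c, c cᵀ + B Bᵀ]]`, so `a = √S₀₀` and `c = S₁₀ / a` are forced by `S`
(both vanish when `S₀₀ = 0`, since the first column of a positive semidefinite `S` then vanishes),
and `B Bᵀ` must be the Schur complement `S₁₁ - c cᵀ`. This complement is again positive
semidefinite, being the Gram matrix of the rows of a factor `R` of `S = R Rᵀ` projected
orthogonally to its first row, so the induction hypothesis applies to it.
-/

open Matrix

/-- Membership in `M_K`: lower triangular, columns outside `K` vanish, and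
positive diagonal entries on `K`. -/
def MemMK (n : ℕ) (K : Finset (Fin n)) (A : Matrix (Fin n) (Fin n) ℝ) : Prop :=
  (∀ i j : Fin n, (i < j ∨ j ∉ K) → A i j = 0) ∧ ∀ k ∈ K, 0 < A k k

/-- `C_K = {A Aᵀ : A ∈ M_K}`. -/
def CsetK (n : ℕ) (K : Finset (Fin n)) : Set (Matrix (Fin n) (Fin n) ℝ) :=
  {S | ∃ A, MemMK n K A ∧ S = A * Aᵀ}

namespace Matrix

lemma mul_transpose_apply_eq_dotProduct {ι κ : Type*} [Fintype κ] (M N : Matrix ι κ ℝ)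
    (i j : ι) : (M * Nᵀ) i j = M i ⬝ᵥ N j :=
  rfl

variable {ι : Type*} [Fintype ι]

lemma PosSemidef.exists_eq_mul_transpose {S : Matrix ι ι ℝ} (hS : S.PosSemidef) :
    ∃ R : Matrix ι ι ℝ, S = R * Rᵀ := by
  classical
  open scoped MatrixOrder in
  obtain ⟨B, rfl⟩ := CStarAlgebra.nonneg_iff_eq_star_mul_self.mp hS.nonneg
  refine ⟨Bᵀ, ?_⟩
  rw [transpose_transpose, star_eq_conjTranspose, conjTranspose_eq_transpose_of_trivial]

lemma PosSemidef.apply_eq_zero_of_diag_eq_zero [DecidableEq ι] {S : Matrix ι ι ℝ}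
    (hS : S.PosSemidef) {k : ι} (hk : S k k = 0) (i : ι) : S i k = 0 := by
  have hSk : S *ᵥ Pi.single k 1 = 0 :=
    (hS.dotProduct_mulVec_zero_iff _).mp (by simpa [mulVec_single_one] using hk)
  simpa [mulVec_single_one] using congrFun hSk i

end Matrix

namespace Fin

variable {n : ℕ}

lemma exists_finset_zero_mem_iff_preimage_succ_eq (p : Prop) (K₁ : Finset (Fin n)) :
    ∃ K : Finset (Fin (n + 1)),
      (0 ∈ K ↔ p) ∧ K.preimage succ (succ_injective n).injOn = K₁ := by
  classical
  exact ⟨Finset.univ.filter (cons p (· ∈ K₁)), by simp, by ext; simp⟩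

lemma finset_ext_zero_succ {K K' : Finset (Fin (n + 1))} (h0 : 0 ∈ K ↔ 0 ∈ K')
    (hsucc : K.preimage succ (succ_injective n).injOn = K'.preimage succ (succ_injective n).injOn) :
    K = K' := by
  ext k
  cases k using Fin.cases
  · exact h0
  · simpa using Finset.ext_iff.mp hsucc _

end Fin

section Cholesky

variable {n : ℕ}

/-- The block matrix `[[a, 0], [c, B]]`. -/
def lowerBlock (a : ℝ) (c : Fin n → ℝ) (B : Matrix (Fin n) (Fin n) ℝ) :
    Matrix (Fin (n + 1)) (Fin (n + 1)) ℝ :=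
  Matrix.of (Fin.cons (Fin.cons a 0) fun i => Fin.cons (c i) (B i))

section lowerBlock

variable (a : ℝ) (c : Fin n → ℝ) (B : Matrix (Fin n) (Fin n) ℝ)

@[simp] lemma lowerBlock_zero_zero : lowerBlock a c B 0 0 = a := rfl
@[simp] lemma lowerBlock_zero_succ (j : Fin n) : lowerBlock a c B 0 j.succ = 0 := rfl
@[simp] lemma lowerBlock_succ_zero (i : Fin n) : lowerBlock a c B i.succ 0 = c i := rfl
@[simp] lemma lowerBlock_succ_succ (i j : Fin n) : lowerBlock a c B i.succ j.succ = B i j := rfl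

lemma lowerBlock_mul_transpose_zero_zero :
    (lowerBlock a c B * (lowerBlock a c B)ᵀ) 0 0 = a * a := by
  simp [mul_apply, Fin.sum_univ_succ]

lemma lowerBlock_mul_transpose_zero_succ (j : Fin n) :
    (lowerBlock a c B * (lowerBlock a c B)ᵀ) 0 j.succ = a * c j := by
  simp [mul_apply, Fin.sum_univ_succ]

lemma lowerBlock_mul_transpose_succ_zero (i : Fin n) :
    (lowerBlock a c B * (lowerBlock a c B)ᵀ) i.succ 0 = c i * a := by
  simp [mul_apply, Fin.sum_univ_succ]

lemma lowerBlock_mul_transpose_succ_succ (i j : Fin n) :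
    (lowerBlock a c B * (lowerBlock a c B)ᵀ) i.succ j.succ = c i * c j + (B * Bᵀ) i j := by
  simp [mul_apply, Fin.sum_univ_succ]

end lowerBlock

lemma MemMK.eq_lowerBlock {K : Finset (Fin (n + 1))} {A : Matrix (Fin (n + 1)) (Fin (n + 1)) ℝ}
    (hA : MemMK (n + 1) K A) :
    A = lowerBlock (A 0 0) (fun i => A i.succ 0) (A.submatrix Fin.succ Fin.succ) := by
  ext i j
  cases i using Fin.cases <;> cases j using Fin.cases
  · rfl
  · exact hA.1 _ _ (.inl (Fin.succ_pos _))
  · rfl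
  · rfl

lemma memMK_lowerBlock_iff {a : ℝ} {c : Fin n → ℝ} {B : Matrix (Fin n) (Fin n) ℝ}
    {K : Finset (Fin (n + 1))} :
    MemMK (n + 1) K (lowerBlock a c B) ↔
      (0 ∈ K → 0 < a) ∧ (0 ∉ K → a = 0 ∧ c = 0) ∧
        MemMK n (K.preimage Fin.succ (Fin.succ_injective n).injOn) B := by
  constructor
  · rintro ⟨hzero, hpos⟩
    refine ⟨hpos 0, fun h0 => ⟨hzero 0 0 (.inr h0), funext fun i => hzero i.succ 0 (.inr h0)⟩,
      fun i j hij => hzero i.succ j.succ ?_, fun k hk => hpos k.succ (Finset.mem_preimage.mp hk)⟩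
    simpa [Fin.succ_lt_succ_iff] using hij
  · rintro ⟨hpos0, hzero0, hzero, hpos⟩
    refine ⟨fun i j hij => ?_, fun k hk => ?_⟩
    · cases i using Fin.cases <;> cases j using Fin.cases
      · simpa using (hzero0 (hij.resolve_left (lt_irrefl 0))).1
      · rfl
      · simpa using congrFun (hzero0 (hij.resolve_left (Fin.not_lt_zero _))).2 _
      · simpa using hzero _ _ (by simpa [Fin.succ_lt_succ_iff] using hij)
    · cases k using Fin.cases
      · exact hpos0 hk
      · exact hpos _ (Finset.mem_preimage.mpr hk)

/-- The first column of the factor below `√S₀₀`. The junk value `x / 0 = 0` makes it vanish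
when `S₀₀ = 0`, as it must for positive semidefinite `S`. -/
noncomputable def pivotCol (S : Matrix (Fin (n + 1)) (Fin (n + 1)) ℝ) : Fin n → ℝ :=
  fun i => S i.succ 0 / √(S 0 0)

noncomputable def schurCompl (S : Matrix (Fin (n + 1)) (Fin (n + 1)) ℝ) :
    Matrix (Fin n) (Fin n) ℝ :=
  S.submatrix Fin.succ Fin.succ - vecMulVec (pivotCol S) (pivotCol S)

lemma pivotCol_eq_zero {S : Matrix (Fin (n + 1)) (Fin (n + 1)) ℝ} (h : S 0 0 = 0) :
    pivotCol S = 0 :=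
  funext fun i => by simp [pivotCol, h]

lemma Matrix.PosSemidef.pivotCol_mul_sqrt {S : Matrix (Fin (n + 1)) (Fin (n + 1)) ℝ}
    (hS : S.PosSemidef) (i : Fin n) : pivotCol S i * √(S 0 0) = S i.succ 0 := by
  rcases (hS.diag_nonneg (i := 0)).eq_or_lt with h | h
  · simp [pivotCol_eq_zero h.symm, hS.apply_eq_zero_of_diag_eq_zero h.symm]
  · exact div_mul_cancel₀ _ (Real.sqrt_pos.mpr h).ne'

lemma Matrix.PosSemidef.posSemidef_schurCompl {S : Matrix (Fin (n + 1)) (Fin (n + 1)) ℝ}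
    (hS : S.PosSemidef) : (schurCompl S).PosSemidef := by
  obtain ⟨R, rfl⟩ := hS.exists_eq_mul_transpose
  let P : Matrix (Fin n) (Fin (n + 1)) ℝ :=
    fun i => R i.succ - ((R i.succ ⬝ᵥ R 0) / (R 0 ⬝ᵥ R 0)) • R 0
  convert posSemidef_self_mul_conjTranspose P using 1
  ext i j
  rw [conjTranspose_eq_transpose_of_trivial, mul_transpose_apply_eq_dotProduct]
  simp only [schurCompl, pivotCol, Matrix.sub_apply, submatrix_apply, vecMulVec_apply,
    mul_transpose_apply_eq_dotProduct, P, dotProduct_sub, sub_dotProduct,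
    dotProduct_smul, smul_dotProduct, smul_eq_mul]
  rcases (hS.diag_nonneg (i := 0)).eq_or_lt with hs | hs
  · have : R 0 = 0 := dotProduct_self_eq_zero.mp hs.symm
    simp [this]
  · change 0 < R 0 ⬝ᵥ R 0 at hs
    rw [div_mul_div_comm, Real.mul_self_sqrt hs.le, dotProduct_comm (R 0) (R j.succ)]
    field_simp
    ring

lemma MemMK.eq_sqrt_pivotCol_schurCompl {a : ℝ} {c : Fin n → ℝ} {B : Matrix (Fin n) (Fin n) ℝ}
    {K : Finset (Fin (n + 1))} {S : Matrix (Fin (n + 1)) (Fin (n + 1)) ℝ}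
    (hL : MemMK (n + 1) K (lowerBlock a c B))
    (hS : S = lowerBlock a c B * (lowerBlock a c B)ᵀ) :
    a = √(S 0 0) ∧ c = pivotCol S ∧ schurCompl S = B * Bᵀ ∧ (0 ∈ K ↔ 0 < S 0 0) := by
  obtain ⟨hpos, hzero, -⟩ := memMK_lowerBlock_iff.mp hL
  have hK : 0 ∈ K ↔ 0 < a :=
    ⟨hpos, fun ha => by_contra fun h => ha.ne' (hzero h).1⟩
  have ha : 0 ≤ a := by
    by_cases h : 0 ∈ K
    · exact (hpos h).le
    · exact (hzero h).1.ge
  have hS00 : S 0 0 = a * a := by rw [hS, lowerBlock_mul_transpose_zero_zero]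
  have ha_eq : a = √(S 0 0) := by rw [hS00, Real.sqrt_mul_self ha]
  have hc : c = pivotCol S := by
    rcases ha.eq_or_lt with rfl | ha0
    · rw [(hzero (mt hK.mp (lt_irrefl 0))).2, pivotCol_eq_zero (by rw [hS00, mul_zero])]
    · funext i
      rw [pivotCol, ← ha_eq, hS, lowerBlock_mul_transpose_succ_zero,
        mul_div_cancel_right₀ _ ha0.ne']
  refine ⟨ha_eq, hc, ?_, ?_⟩
  · ext i j
    simp only [schurCompl, Matrix.sub_apply, submatrix_apply, vecMulVec_apply, ← hc]
    rw [hS, lowerBlock_mul_transpose_succ_succ, add_sub_cancel_left]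
  · rw [hK, hS00, mul_self_pos, ha.lt_iff_ne']

lemma Matrix.PosSemidef.eq_lowerBlock_mul_transpose {S : Matrix (Fin (n + 1)) (Fin (n + 1)) ℝ}
    (hS : S.PosSemidef) {B : Matrix (Fin n) (Fin n) ℝ} (hB : schurCompl S = B * Bᵀ) :
    S = lowerBlock √(S 0 0) (pivotCol S) B * (lowerBlock √(S 0 0) (pivotCol S) B)ᵀ := by
  ext i j
  cases i using Fin.cases <;> cases j using Fin.cases
  · rw [lowerBlock_mul_transpose_zero_zero, Real.mul_self_sqrt hS.diag_nonneg]
  · rw [lowerBlock_mul_transpose_zero_succ, mul_comm, hS.pivotCol_mul_sqrt,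
      ← hS.isHermitian.apply, star_trivial]
  · rw [lowerBlock_mul_transpose_succ_zero, hS.pivotCol_mul_sqrt]
  · rw [lowerBlock_mul_transpose_succ_succ, ← hB]
    simp [schurCompl, vecMulVec_apply]

theorem Matrix.PosSemidef.existsUnique_memMK_eq_mul_transpose :
    ∀ {n : ℕ} {S : Matrix (Fin n) (Fin n) ℝ}, S.PosSemidef →
      ∃ K : Finset (Fin n), ∃ A : Matrix (Fin n) (Fin n) ℝ,
        MemMK n K A ∧ S = A * Aᵀ ∧
        ∀ (K' : Finset (Fin n)) (A' : Matrix (Fin n) (Fin n) ℝ),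
          MemMK n K' A' → S = A' * A'ᵀ → K' = K ∧ A' = A
  | 0, _, _ => ⟨∅, 0, ⟨fun i => i.elim0, fun k => k.elim0⟩, Subsingleton.elim _ _,
      fun _ _ _ _ => ⟨Subsingleton.elim _ _, Subsingleton.elim _ _⟩⟩
  | n + 1, S, hS => by
    obtain ⟨K₁, A₁, hA₁, hSchur, huniq⟩ :=
      existsUnique_memMK_eq_mul_transpose hS.posSemidef_schurCompl
    obtain ⟨K, hK0, hKsucc⟩ := Fin.exists_finset_zero_mem_iff_preimage_succ_eq (0 < S 0 0) K₁
    refine ⟨K, lowerBlock √(S 0 0) (pivotCol S) A₁,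
      memMK_lowerBlock_iff.mpr
        ⟨fun h => Real.sqrt_pos.mpr (hK0.mp h), fun h => ?_, hKsucc ▸ hA₁⟩,
      hS.eq_lowerBlock_mul_transpose hSchur, fun K' A' hA' hS' => ?_⟩
    · have hS00 : S 0 0 = 0 := le_antisymm (not_lt.mp (mt hK0.mpr h)) hS.diag_nonneg
      simp [hS00, pivotCol_eq_zero hS00]
    · have hA'_eq := hA'.eq_lowerBlock
      rw [hA'_eq] at hA' hS' ⊢
      obtain ⟨ha, hc, hB, h0⟩ := hA'.eq_sqrt_pivotCol_schurCompl hS'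
      obtain ⟨hK', rfl⟩ := huniq _ _ (memMK_lowerBlock_iff.mp hA').2.2 hB
      exact ⟨Fin.finset_ext_zero_succ (h0.trans hK0.symm) (hK'.trans hKsucc.symm),
        by rw [ha, hc]⟩

end Cholesky

theorem stmt8_general (n : ℕ) :
    (∀ S : Matrix (Fin n) (Fin n) ℝ, S.PosSemidef →
      ∃ K : Finset (Fin n), ∃ A : Matrix (Fin n) (Fin n) ℝ,
        MemMK n K A ∧ S = A * Aᵀ ∧
        ∀ (K' : Finset (Fin n)) (A' : Matrix (Fin n) (Fin n) ℝ),
          MemMK n K' A' → S = A' * A'ᵀ → K' = K ∧ A' = A) ∧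
    (∀ (K : Finset (Fin n)) (A : Matrix (Fin n) (Fin n) ℝ),
      MemMK n K A → (A * Aᵀ).PosSemidef) :=
  ⟨fun _ hS => hS.existsUnique_memMK_eq_mul_transpose, fun _ A _ => by
    simpa only [conjTranspose_eq_transpose_of_trivial] using posSemidef_self_mul_conjTranspose A⟩

theorem stmt8 (n : ℕ) (hn : 1 ≤ n) :
    (∀ S : Matrix (Fin n) (Fin n) ℝ, S.PosSemidef →
      ∃ K : Finset (Fin n), ∃ A : Matrix (Fin n) (Fin n) ℝ,
        MemMK n K A ∧ S = A * Aᵀ ∧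
        ∀ (K' : Finset (Fin n)) (A' : Matrix (Fin n) (Fin n) ℝ),
          MemMK n K' A' → S = A' * A'ᵀ → K' = K ∧ A' = A) ∧
    (∀ (K : Finset (Fin n)) (A : Matrix (Fin n) (Fin n) ℝ),
      MemMK n K A → (A * Aᵀ).PosSemidef) :=
  stmt8_general n
end

section
/- Let n ≥ 1 and L ⊆ {1,…,n}. In the space of n×n real matrices with its standard topology, the closure of C_L equals the union of the sets C_K over all K ⊆ {1,…,n} satisfying #(K ∩ {1,…,j}) ≤ #(L ∩ {1,…,j}) for every j with 1 ≤ j ≤ n. -/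
open Matrix

open Finset InnerProductSpace

/-!
The closure of `C_L` consists of positive semidefinite matrices, and every such matrix is
`A Aᵀ` with `A ∈ M_K` for some `K`: run Gram–Schmidt on vectors whose Gram matrix it is, let `K`
be the set of indices where Gram–Schmidt does not return zero, and take the coordinates of the
vectors in the resulting orthonormal basis. For `B ∈ M_L` the rows with index `< j` live in the
columns of `L ∩ {i < j}`, so the principal minor of `B Bᵀ` on `J = K ∩ {i < j}` vanishes when
`#J > #(L ∩ {i < j})`; by continuity it vanishes on the closure of `C_L`, while on `C_K` it does
not. Conversely, if `K` is dominated by `L`, a pigeonhole induction gives a permutation sending each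
`k ∈ K` to an element of `L` that is `≤ k`; permuting the columns of `A ∈ M_K` accordingly keeps
`A Aᵀ` and gives a limit of matrices in `M_L`, namely of the perturbations by `ε` on the diagonal
entries in `L`.
-/

theorem Matrix.det_ne_zero_iff_rank_eq_card {m K : Type*} [Fintype m] [DecidableEq m] [Field K]
    {A : Matrix m m K} : A.det ≠ 0 ↔ A.rank = Fintype.card m := by
  refine ⟨rank_of_det_ne_zero, fun h => ?_⟩
  have hrange : LinearMap.range A.mulVecLin = ⊤ :=
    Submodule.eq_top_of_finrank_eq (by rw [Module.finrank_pi]; exact h)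
  exact (isUnit_iff_isUnit_det A).mp
    (mulVec_surjective_iff_isUnit.mp (LinearMap.range_eq_top.mp hrange)) |>.ne_zero

theorem Matrix.rank_submatrix_mul_transpose {m n m₀ R : Type*} [Fintype m₀] [Fintype n] [Field R]
    [LinearOrder R] [IsStrictOrderedRing R] (A : Matrix m n R) (r : m₀ → m) :
    ((A * Aᵀ).submatrix r r).rank = (A.submatrix r id).rank := by
  rw [submatrix_mul _ _ _ id _ Function.bijective_id, ← transpose_submatrix,
    rank_self_mul_transpose]

theorem Finset.exists_perm_mem_le_of_card_filter_le {α : Type*} [LinearOrder α] [Fintype α]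
    {s t : Finset α} (hst : ∀ a, #(s.filter (· ≤ a)) ≤ #(t.filter (· ≤ a))) :
    ∃ π : Equiv.Perm α, ∀ x ∈ s, π x ∈ t ∧ π x ≤ x := by
  induction s using Finset.induction_on_max with
  | empty => exact ⟨1, by simp⟩
  | insert a s hlt ih =>
    have has : a ∉ s := fun h => (hlt a h).false
    obtain ⟨π, hπ⟩ := ih fun b =>
      (card_le_card (filter_subset_filter _ (subset_insert a s))).trans (hst b)
    -- pigeonhole: `t` has more elements `≤ a` than `π` uses on `s`
    obtain ⟨y, hy⟩ : (t.filter (· ≤ a) \ s.image π).Nonempty := by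
      rw [← card_pos]
      have h1 := hst a
      rw [filter_insert, if_pos le_rfl, filter_true_of_mem fun x hx => (hlt x hx).le,
        card_insert_of_notMem has] at h1
      have := le_card_sdiff (s.image π) (t.filter (· ≤ a))
      have := card_image_le (s := s) (f := π)
      omega
    simp only [mem_sdiff, mem_filter, mem_image, not_exists, not_and] at hy
    obtain ⟨⟨hyt, hya⟩, hys⟩ := hy
    refine ⟨Equiv.swap y (π a) * π, fun x hx => ?_⟩
    rcases mem_insert.mp hx with rfl | hx
    · simp [hyt, hya]
    · have hxa : π x ≠ π a := π.injective.ne (hlt x hx).ne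
      rw [Equiv.Perm.mul_apply, Equiv.swap_apply_of_ne_of_ne (hys x hx) hxa]
      exact hπ x hx

theorem InnerProductSpace.inner_gramSchmidt_self {𝕜 E ι : Type*} [RCLike 𝕜] [NormedAddCommGroup E]
    [InnerProductSpace 𝕜 E] [LinearOrder ι] [LocallyFiniteOrderBot ι] [WellFoundedLT ι]
    (f : ι → E) (n : ι) :
    inner 𝕜 (gramSchmidt 𝕜 f n) (f n) = (‖gramSchmidt 𝕜 f n‖ : 𝕜) ^ 2 := by
  conv_lhs => rw [gramSchmidt_def'' 𝕜 f n]
  simp only [inner_add_right, inner_sum, inner_smul_right, inner_self_eq_norm_sq_to_K]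
  rw [sum_eq_zero fun i hi => by rw [gramSchmidt_orthogonal 𝕜 f (mem_Iio.mp hi).ne', mul_zero],
    add_zero]

theorem Matrix.PosSemidef.exists_gram_eq {m : Type*} [Fintype m] [DecidableEq m] {S : Matrix m m ℝ}
    (hS : S.PosSemidef) : ∃ v : m → EuclideanSpace ℝ m, gram ℝ v = S := by
  obtain ⟨B, rfl⟩ := by
    open scoped MatrixOrder in exact CStarAlgebra.nonneg_iff_eq_star_mul_self.mp hS.nonneg
  refine ⟨fun j => WithLp.toLp 2 fun k => B k j, ?_⟩
  ext i j
  simp [gram_apply, mul_apply, EuclideanSpace.inner_eq_star_dotProduct, dotProduct, mul_comm]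

theorem isClosed_setOf_posSemidef {m : Type*} [Fintype m] :
    IsClosed {S : Matrix m m ℝ | S.PosSemidef} := by
  simp only [posSemidef_iff_dotProduct_mulVec, Set.ofPred_and, Set.ofPred_forall]
  exact (isClosed_eq continuous_id.matrix_conjTranspose continuous_id).inter
    (isClosed_iInter fun x => isClosed_le continuous_const
      (continuous_const.dotProduct (continuous_id.matrix_mulVec continuous_const)))

section

variable {n : ℕ}

theorem exists_memMK_gram_eq {E : Type*} [NormedAddCommGroup E] [InnerProductSpace ℝ E]
    [FiniteDimensional ℝ E] (h : Module.finrank ℝ E = n) (v : Fin n → E) :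
    ∃ K A, MemMK n K A ∧ gram ℝ v = A * Aᵀ := by
  classical
  have h' : Module.finrank ℝ E = Fintype.card (Fin n) := by simpa using h
  set b := gramSchmidtOrthonormalBasis h' v
  refine ⟨univ.filter fun k => gramSchmidtNormed ℝ v k ≠ 0, of fun i k => inner ℝ (b k) (v i),
    ⟨fun i k hik => ?_, fun k hk => ?_⟩, ?_⟩
  · rcases hik with hik | hk
    · exact gramSchmidtOrthonormalBasis_inv_triangular h' v hik
    · exact inner_gramSchmidtOrthonormalBasis_eq_zero h' (by simpa using hk) i
  · have hk : gramSchmidtNormed ℝ v k ≠ 0 := (mem_filter.mp hk).2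
    have hgs : gramSchmidt ℝ v k ≠ 0 := fun h0 => hk (by simp [gramSchmidtNormed, h0])
    simp only [of_apply, b, gramSchmidtOrthonormalBasis_apply h' hk, gramSchmidtNormed,
      inner_smul_left, inner_gramSchmidt_self]
    simp [hgs]
  · rw [gram_eq_conjTranspose_mul b]
    ext i j
    simp [mul_apply, b.repr_apply_apply]

theorem exists_memMK_of_posSemidef {S : Matrix (Fin n) (Fin n) ℝ} (hS : S.PosSemidef) :
    ∃ K A, MemMK n K A ∧ S = A * Aᵀ := by
  obtain ⟨v, rfl⟩ := hS.exists_gram_eq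
  exact exists_memMK_gram_eq finrank_euclideanSpace_fin v

theorem posSemidef_of_mem_closure_csetK {L : Finset (Fin n)} {S : Matrix (Fin n) (Fin n) ℝ}
    (hS : S ∈ closure (CsetK n L)) : S.PosSemidef := by
  refine closure_minimal ?_ isClosed_setOf_posSemidef hS
  rintro _ ⟨A, -, rfl⟩
  simpa using posSemidef_self_mul_conjTranspose A

theorem MemMK.rank_submatrix_le {K : Finset (Fin n)} {A : Matrix (Fin n) (Fin n) ℝ}
    (hA : MemMK n K A) {m : Type*} [Fintype m] {r : m → Fin n} {j : ℕ}
    (hr : ∀ a, (r a : ℕ) < j) :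
    (A.submatrix r id).rank ≤ #(K.filter fun i : Fin n => (i : ℕ) < j) := by
  rw [← rank_transpose]
  refine rank_le_card_of_support_subset _ _ fun l hl => ?_
  obtain ⟨a, ha⟩ : ∃ a, A (r a) l ≠ 0 := by
    by_contra! h
    exact hl (funext h)
  have hlK : l ∈ K := by_contra fun hlK => ha (hA.1 _ _ (Or.inr hlK))
  have hle : l ≤ r a := not_lt.mp fun h => ha (hA.1 _ _ (Or.inl h))
  exact mem_filter.mpr ⟨hlK, (Fin.le_iff_val_le_val.mp hle).trans_lt (hr a)⟩

theorem MemMK.rank_submatrix_eq_card {K : Finset (Fin n)} {A : Matrix (Fin n) (Fin n) ℝ}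
    (hA : MemMK n K A) {J : Finset (Fin n)} (hJ : J ⊆ K) :
    (A.submatrix ((↑) : J → Fin n) id).rank = #J := by
  have htri : (A.submatrix ((↑) : J → Fin n) (↑)).IsLowerTriangular :=
    fun i j hij => hA.1 i j (.inl (Subtype.coe_lt_coe.mpr (OrderDual.toDual_lt_toDual.mp hij)))
  have hdet : (A.submatrix ((↑) : J → Fin n) (↑)).det ≠ 0 := by
    rw [det_of_isLowerTriangular _ htri]
    exact prod_ne_zero_iff.mpr fun k _ => (hA.2 k (hJ k.2)).ne'
  refine le_antisymm ((rank_le_card_height _).trans_eq (Fintype.card_coe J)) ?_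
  calc #J = (A.submatrix ((↑) : J → Fin n) ((↑) : J → Fin n)).rank := by
        rw [rank_of_det_ne_zero hdet, Fintype.card_coe]
    _ ≤ _ := Matrix.rank_submatrix_le (A.submatrix ((↑) : J → Fin n) id) id ((↑) : J → Fin n)

theorem MemMK.card_filter_lt_le_of_mem_closure {K L : Finset (Fin n)}
    {A : Matrix (Fin n) (Fin n) ℝ} (hA : MemMK n K A) (hS : A * Aᵀ ∈ closure (CsetK n L))
    (j : ℕ) :
    #(K.filter fun i : Fin n => (i : ℕ) < j) ≤ #(L.filter fun i : Fin n => (i : ℕ) < j) := by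
  by_contra! hlt
  set J := K.filter fun i : Fin n => (i : ℕ) < j
  have hclosed :
      IsClosed {S : Matrix (Fin n) (Fin n) ℝ | (S.submatrix ((↑) : J → Fin n) (↑)).det = 0} :=
    isClosed_eq (continuous_id.matrix_submatrix _ _).matrix_det continuous_const
  have hvanish : CsetK n L ⊆ {S | (S.submatrix ((↑) : J → Fin n) (↑)).det = 0} := by
    rintro _ ⟨B, hB, rfl⟩
    by_contra h
    rw [Set.mem_ofPred_eq, ← ne_eq, det_ne_zero_iff_rank_eq_card, rank_submatrix_mul_transpose,
      Fintype.card_coe] at h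
    have := hB.rank_submatrix_le (r := ((↑) : J → Fin n)) fun a => (mem_filter.mp a.2).2
    omega
  refine (det_ne_zero_iff_rank_eq_card.mpr ?_) (closure_minimal hvanish hclosed hS)
  rw [rank_submatrix_mul_transpose, hA.rank_submatrix_eq_card (filter_subset _ _),
    Fintype.card_coe]

theorem mul_transpose_mem_closure_csetK {L : Finset (Fin n)} {B : Matrix (Fin n) (Fin n) ℝ}
    (hzero : ∀ i j : Fin n, (i < j ∨ j ∉ L) → B i j = 0) (hdiag : ∀ l ∈ L, 0 ≤ B l l) :
    B * Bᵀ ∈ closure (CsetK n L) := by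
  set D : Matrix (Fin n) (Fin n) ℝ := diagonal fun l => if l ∈ L then 1 else 0
  have hcont : Continuous fun ε : ℝ => (B + ε • D) * (B + ε • D)ᵀ := by fun_prop
  have hmem : ∀ ε ∈ Set.Ioi (0 : ℝ), (B + ε • D) * (B + ε • D)ᵀ ∈ CsetK n L := by
    refine fun ε hε => ⟨_, ⟨fun i j hij => ?_, fun l hl => ?_⟩, rfl⟩
    · rcases hij with h | h
      · simp [D, hzero i j (.inl h), h.ne]
      · have hD : D i j = 0 := by
          simp only [D, diagonal_apply]
          split_ifs with hij <;> simp_all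
        simp [hzero i j (.inr h), hD]
    · simpa [D, hl] using add_pos_of_nonneg_of_pos (hdiag l hl) (Set.mem_Ioi.mp hε)
  have hlim : Filter.Tendsto (fun ε : ℝ => (B + ε • D) * (B + ε • D)ᵀ) (nhdsWithin 0 (Set.Ioi 0))
      (nhds (B * Bᵀ)) := by
    simpa using (hcont.tendsto 0).mono_left nhdsWithin_le_nhds
  exact mem_closure_of_tendsto hlim (eventually_nhdsWithin_of_forall hmem)

theorem csetK_subset_closure_csetK {K L : Finset (Fin n)}
    (hKL : ∀ a, #(K.filter (· ≤ a)) ≤ #(L.filter (· ≤ a))) :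
    CsetK n K ⊆ closure (CsetK n L) := by
  rintro _ ⟨A, hA, rfl⟩
  obtain ⟨π, hπ⟩ := exists_perm_mem_le_of_card_filter_le hKL
  rw [← submatrix_mul_transpose_submatrix π.symm A, ← transpose_submatrix]
  refine mul_transpose_mem_closure_csetK (fun i l hil => ?_) (fun l hl => ?_) <;>
    obtain ⟨k, rfl⟩ := π.surjective l <;>
    simp only [submatrix_apply, id_eq, Equiv.symm_apply_apply]
  · by_cases hk : k ∈ K
    · refine hA.1 i k (Or.inl ?_)
      rcases hil with h | h
      · exact h.trans_le (hπ k hk).2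
      · exact absurd (hπ k hk).1 h
    · exact hA.1 i k (Or.inr hk)
  · by_cases hk : k ∈ K
    · rcases (hπ k hk).2.lt_or_eq with h | h
      · exact (hA.1 _ _ (Or.inl h)).ge
      · rw [h]
        exact (hA.2 k hk).le
    · exact (hA.1 _ _ (Or.inr hk)).ge

end

theorem stmt10_general (n : ℕ) (L : Finset (Fin n)) :
    closure (CsetK n L) =
      ⋃ K ∈ {K : Finset (Fin n) | ∀ j : ℕ, 1 ≤ j → j ≤ n →
          (K.filter (fun i : Fin n => (i : ℕ) < j)).card ≤ (L.filter (fun i : Fin n => (i : ℕ) < j)).card},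
        CsetK n K := by
  refine Set.Subset.antisymm (fun S hS => ?_) (Set.iUnion₂_subset fun K hK => ?_)
  · obtain ⟨K, A, hA, rfl⟩ := exists_memMK_of_posSemidef (posSemidef_of_mem_closure_csetK hS)
    exact Set.mem_biUnion (fun j _ _ => hA.card_filter_lt_le_of_mem_closure hS j) ⟨A, hA, rfl⟩
  · refine csetK_subset_closure_csetK fun a => ?_
    have h := hK (a + 1) (Nat.succ_pos _) a.isLt
    simpa only [Nat.lt_succ_iff, Fin.le_iff_val_le_val] using h

theorem stmt10 (n : ℕ) (hn : 1 ≤ n) (L : Finset (Fin n)) :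
    closure (CsetK n L) =
      ⋃ K ∈ {K : Finset (Fin n) | ∀ j : ℕ, 1 ≤ j → j ≤ n →
          (K.filter (fun i : Fin n => (i : ℕ) < j)).card ≤ (L.filter (fun i : Fin n => (i : ℕ) < j)).card},
        CsetK n K :=
  stmt10_general n L
end

section
/- Let n ≥ 1 and set N = n(n+1)/2. The set Q̄ = {B : B is an n×n real matrix, Bᵀ = B, and I − B·B is positive semi-definite}, with the topology induced from the space of n×n real matrices, is homeomorphic to the closed unit ball in ℝ^N (equivalently, to a closed ball of dimension N). -/
/-!
For symmetric real `B` we have `Bᴴ * B = B * B`, and `⟪(1 - Bᴴ * B) x, x⟫ = ‖x‖² - ‖B x‖²`, so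
`1 - B * B` is positive semidefinite exactly when `‖B‖ ≤ 1` in the `L²` operator norm. Hence `Q̄` is
the closed unit ball of the space of symmetric matrices, a real vector space with coordinates
indexed by `Sym2 (Fin n)`, of dimension `n (n + 1) / 2`. A linear isomorphism with Euclidean space
maps this ball to a bounded convex set with nonempty interior, which gauge rescaling carries onto
the Euclidean unit ball.
-/

open Matrix Metric
open scoped ComplexOrder

namespace ContinuousLinearMap

variable {𝕜 E : Type*} [RCLike 𝕜] [NormedAddCommGroup E] [InnerProductSpace 𝕜 E] [CompleteSpace E]

theorem reApplyInnerSelf_one_sub_star_mul_self (T : E →L[𝕜] E) (x : E) :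
    (1 - star T * T).reApplyInnerSelf x = ‖x‖ ^ 2 - ‖T x‖ ^ 2 := by
  simp [reApplyInnerSelf, inner_sub_left, star_eq_adjoint, adjoint_inner_left]

theorem isPositive_one_sub_star_mul_self_iff (T : E →L[𝕜] E) :
    (1 - star T * T).IsPositive ↔ ‖T‖ ≤ 1 := by
  have hsa : IsSelfAdjoint (1 - star T * T) := .sub (.one _) (.star_mul_self T)
  simp only [isPositive_def', hsa, true_and, opNorm_le_iff zero_le_one, one_mul,
    reApplyInnerSelf_one_sub_star_mul_self, sub_nonneg]
  exact forall_congr' fun x => pow_le_pow_iff_left₀ (norm_nonneg _) (norm_nonneg _) two_ne_zero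

end ContinuousLinearMap

section L2OpNorm

open scoped Matrix.Norms.L2Operator

theorem Matrix.posSemidef_one_sub_conjTranspose_mul_self_iff {𝕜 n : Type*} [RCLike 𝕜]
    [Fintype n] [DecidableEq n] (B : Matrix n n 𝕜) :
    (1 - Bᴴ * B).PosSemidef ↔ ‖B‖ ≤ 1 := by
  rw [cstar_norm_def, ← ContinuousLinearMap.isPositive_one_sub_star_mul_self_iff,
    ← isPositive_toEuclideanLin_iff, ← map_star, star_eq_conjTranspose, ← map_mul,
    ← map_one (toEuclideanCLM (𝕜 := 𝕜) (n := n)), ← map_sub]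
  rfl

end L2OpNorm

namespace Matrix

variable (R n : Type*) [CommSemiring R]

def symmetricSubmodule : Submodule R (Matrix n n R) where
  carrier := {B | B.IsSymm}
  add_mem' := IsSymm.add
  zero_mem' := isSymm_zero
  smul_mem' c _ hB := hB.smul c

def symmetricSubmoduleEquiv : symmetricSubmodule R n ≃ₗ[R] (Sym2 n → R) where
  toFun B := Sym2.lift ⟨B.1, fun i j => (B.2.apply i j).symm⟩
  invFun f := ⟨of fun i j => f s(i, j), by ext i j; simp [Sym2.eq_swap]⟩
  map_add' B C := by ext ⟨i, j⟩; rfl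
  map_smul' c B := by ext ⟨i, j⟩; rfl
  left_inv B := by ext i j; rfl
  right_inv f := by ext ⟨i, j⟩; rfl

theorem finrank_symmetricSubmodule [StrongRankCondition R] [Fintype n] :
    Module.finrank R (symmetricSubmodule R n) =
      Fintype.card n * (Fintype.card n + 1) / 2 := by
  rw [(symmetricSubmoduleEquiv R n).finrank_eq, Module.finrank_fintype_fun_eq_card, Sym2.card,
    Nat.choose_two_right, Nat.add_sub_cancel, Nat.mul_comm]

end Matrix

def Homeomorph.subtypeSubtypeEquivSubtypeInter {X : Type*} [TopologicalSpace X]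
    (p q : X → Prop) : {x : Subtype p // q x} ≃ₜ {x // p x ∧ q x} where
  toEquiv := Equiv.subtypeSubtypeEquivSubtypeInter p q
  continuous_toFun := (continuous_subtype_val.comp continuous_subtype_val).subtype_mk _
  continuous_invFun := (continuous_subtype_val.subtype_mk _).subtype_mk _

theorem ContinuousLinearEquiv.nonempty_homeomorph_closedBall {E F : Type*}
    [NormedAddCommGroup E] [NormedSpace ℝ E] [NormedAddCommGroup F] [NormedSpace ℝ F]
    (e : E ≃L[ℝ] F) : Nonempty (closedBall (0 : E) 1 ≃ₜ closedBall (0 : F) 1) := by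
  set s := e '' closedBall 0 1
  have hconv : Convex ℝ s := (convex_closedBall 0 1).linear_image (e : E →ₗ[ℝ] F)
  have hint : (interior s).Nonempty :=
    ⟨0, interior_maximal (Set.image_mono ball_subset_closedBall) (e.isOpenMap _ isOpen_ball)
      ⟨0, mem_ball_self one_pos, map_zero e⟩⟩
  have hbdd : Bornology.IsBounded s :=
    (e : E →L[ℝ] F).lipschitz.isBounded_image isBounded_closedBall
  have hclosed : IsClosed s := e.toHomeomorph.isClosedMap _ isClosed_closedBall
  obtain ⟨h, -, hs, -⟩ :=
    exists_homeomorph_image_interior_closure_frontier_eq_unitBall hconv hint hbdd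
  rw [hclosed.closure_eq] at hs
  exact ⟨(e.toHomeomorph.image _).trans ((h.image s).trans (.setCongr hs))⟩

theorem nonempty_homeomorph_closedBall_of_finrank_eq {E F : Type*}
    [NormedAddCommGroup E] [NormedSpace ℝ E] [FiniteDimensional ℝ E]
    [NormedAddCommGroup F] [NormedSpace ℝ F] [FiniteDimensional ℝ F]
    (h : Module.finrank ℝ E = Module.finrank ℝ F) :
    Nonempty (closedBall (0 : E) 1 ≃ₜ closedBall (0 : F) 1) :=
  (LinearEquiv.ofFinrankEq E F h).toContinuousLinearEquiv.nonempty_homeomorph_closedBall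

theorem stmt12_general (n : ℕ) :
    Nonempty
      (({B : Matrix (Fin n) (Fin n) ℝ | Bᵀ = B ∧ (1 - B * B).PosSemidef} : Set _) ≃ₜ
        (Metric.closedBall (0 : EuclideanSpace ℝ (Fin (n * (n + 1) / 2))) 1 : Set _)) := by
  -- The `L²` operator-norm instances on `Matrix` are built to induce its product topology.
  open scoped Matrix.Norms.L2Operator in
  have hQ : {B : Matrix (Fin n) (Fin n) ℝ | Bᵀ = B ∧ (1 - B * B).PosSemidef} =
      {B | B ∈ symmetricSubmodule ℝ (Fin n) ∧ B ∈ closedBall 0 1} := by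
    ext B
    refine and_congr_right fun hB => ?_
    rw [mem_closedBall_zero_iff, ← posSemidef_one_sub_conjTranspose_mul_self_iff,
      conjTranspose_eq_transpose_of_trivial, hB]
  open scoped Matrix.Norms.L2Operator in
  obtain ⟨e⟩ := nonempty_homeomorph_closedBall_of_finrank_eq
    (E := symmetricSubmodule ℝ (Fin n)) (F := EuclideanSpace ℝ (Fin (n * (n + 1) / 2)))
    (by rw [finrank_symmetricSubmodule, Fintype.card_fin, finrank_euclideanSpace_fin])
  exact ⟨(Homeomorph.setCongr hQ).trans
    ((Homeomorph.subtypeSubtypeEquivSubtypeInter _ _).symm.trans e)⟩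

theorem stmt12 (n : ℕ) (hn : 1 ≤ n) :
    Nonempty
      (({B : Matrix (Fin n) (Fin n) ℝ | Bᵀ = B ∧ (1 - B * B).PosSemidef} : Set _) ≃ₜ
        (Metric.closedBall (0 : EuclideanSpace ℝ (Fin (n * (n + 1) / 2))) 1 : Set _)) :=
  stmt12_general n
end

section
/- Let n ≥ 2. Suppose given real numbers a_{p,q} for 1 ≤ q ≤ n and n+1−q ≤ p ≤ n, with a_{p,q} ≠ 0 for all such p,q and a_{n,q} > 0 for all q = 1,…,n. Let u = Π_{q=1}^{n} ( y_{n+1−q}(a_{n+1−q,q}) · y_{n+2−q}(a_{n+2−q,q}) ⋯ y_n(a_{n,q}) ), the 2n×2n matrix product taken with factors multiplied left to right in the order written (the q = 1 group leftmost). Then u has n×n block form [[A, 0],[C, D]] and the matrix AᵀC is symmetric positive definite. -/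
open Matrix

/-- The negative simple root group element `y_i(a)` (1-based index `i`), a `2n×2n` matrix:
`y_i(a) = I + a(E_{i+1,i} − E_{n+i,n+i+1})` for `1 ≤ i ≤ n-1`, and
`y_n(a) = I + a E_{2n,n}`. -/
def yMat (n : ℕ) (i : ℕ) (a : ℝ) : Matrix (Fin (n + n)) (Fin (n + n)) ℝ :=
  if h : 1 ≤ i ∧ i < n then
    1 + a • (Matrix.single (Fin.castAdd n ⟨i, h.2⟩) (Fin.castAdd n ⟨i - 1, by omega⟩) 1
      - Matrix.single (Fin.natAdd n ⟨i - 1, by omega⟩) (Fin.natAdd n ⟨i, h.2⟩) 1)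
  else if h2 : i = n ∧ 1 ≤ n then
    1 + a • Matrix.single (Fin.natAdd n ⟨n - 1, by omega⟩) (Fin.castAdd n ⟨n - 1, by omega⟩) 1
  else 1

/-- The product `u = Π_{q=1}^{n} ( y_{n+1−q}(a_{n+1−q,q}) ⋯ y_n(a_{n,q}) )`,
factors multiplied left to right (the `q = 1` group leftmost). -/
def uProd (n : ℕ) (a : ℕ → ℕ → ℝ) : Matrix (Fin (n + n)) (Fin (n + n)) ℝ :=
  ((List.range n).map (fun m =>
    ((List.range (m + 1)).map (fun j =>
      yMat n (n - m + j) (a (n - m + j) (m + 1)))).prod)).prod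

/-- The product `u₀` obtained from `u` by deleting every `y_n`-factor. -/
def u0Prod (n : ℕ) (a : ℕ → ℕ → ℝ) : Matrix (Fin (n + n)) (Fin (n + n)) ℝ :=
  ((List.range n).map (fun m =>
    ((List.range m).map (fun j =>
      yMat n (n - m + j) (a (n - m + j) (m + 1)))).prod)).prod

/-- Upper-left `n×n` block. -/
def blk11 (n : ℕ) (u : Matrix (Fin (n + n)) (Fin (n + n)) ℝ) : Matrix (Fin n) (Fin n) ℝ :=
  Matrix.of fun i j => u (Fin.castAdd n i) (Fin.castAdd n j)

/-- Upper-right `n×n` block. -/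
def blk12 (n : ℕ) (u : Matrix (Fin (n + n)) (Fin (n + n)) ℝ) : Matrix (Fin n) (Fin n) ℝ :=
  Matrix.of fun i j => u (Fin.castAdd n i) (Fin.natAdd n j)

/-- Lower-left `n×n` block. -/
def blk21 (n : ℕ) (u : Matrix (Fin (n + n)) (Fin (n + n)) ℝ) : Matrix (Fin n) (Fin n) ℝ :=
  Matrix.of fun i j => u (Fin.natAdd n i) (Fin.castAdd n j)

/-- Lower-right `n×n` block. -/
def blk22 (n : ℕ) (u : Matrix (Fin (n + n)) (Fin (n + n)) ℝ) : Matrix (Fin n) (Fin n) ℝ :=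
  Matrix.of fun i j => u (Fin.natAdd n i) (Fin.natAdd n j)

/-!
Each factor `y_i(c)` with `i < n` is block diagonal, `diag(T, T⁻ᵀ)` for a transvection `T`, and
`y_n(c)` is block lower unitriangular. Hence every partial product has the form
`[[A, 0], [C, A⁻ᵀ]]`, and multiplying by the `q`-th group turns `S = AᵀC` into
`LᵀSL + a_{n,q} E_{nn}`, where `L` is the lower bidiagonal product of the transvections of that
group. This keeps `S` positive semidefinite. If `xᵀSx = 0` afterwards, then `x_n = 0` and the
coordinates `(Lx)_k = x_k + a_{k,q} x_{k-1}` vanish on the rows the group touches; as the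
`a_{k,q}` are nonzero, this pushes the vanishing of `x` one index below that of the previous
step. After all `n` groups `xᵀSx = 0` forces `x = 0`.
-/

namespace Matrix

variable {ι R : Type*} [DecidableEq ι] [CommRing R]

theorem transpose_transvection (i j : ι) (c : R) :
    (transvection i j c)ᵀ = transvection j i c := by
  simp [transvection, transpose_single]

theorem transvection_mul_transvection_neg [Fintype ι] {i j : ι} (h : i ≠ j) (c : R) :
    transvection i j c * transvection i j (-c) = 1 := by
  rw [transvection_mul_transvection_same _ _ h, add_neg_cancel, transvection_zero]

theorem transvection_mulVec_apply [Fintype ι] (i j : ι) (c : R) (x : ι → R) (k : ι) :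
    (transvection i j c *ᵥ x) k = x k + if k = i then c * x j else 0 := by
  simp [transvection, add_mulVec, single_mulVec, Function.update_apply]

theorem fromBlocks_lower_mul_lower [Fintype ι] (A C D L M N : Matrix ι ι R) :
    fromBlocks A 0 C D * fromBlocks L 0 M N = fromBlocks (A * L) 0 (C * L + D * M) (D * N) := by
  simp [fromBlocks_multiply]

section lowerBlock

variable [Fintype ι] {A C D L N : Matrix ι ι R}

theorem transpose_mul_mul_eq_one (hAD : Aᵀ * D = 1) (hLN : Lᵀ * N = 1) :
    (A * L)ᵀ * (D * N) = 1 := by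
  rw [transpose_mul, mul_assoc, ← mul_assoc Aᵀ, hAD, one_mul, hLN]

theorem transpose_mul_add_mul_eq (hAD : Aᵀ * D = 1) (hLN : Lᵀ * N = 1) (E : Matrix ι ι R) :
    (A * L)ᵀ * (C * L + D * (N * E)) = Lᵀ * (Aᵀ * C) * L + E := by
  rw [transpose_mul, mul_add]
  simp only [Matrix.mul_assoc]
  rw [← mul_assoc Aᵀ D, hAD, one_mul, ← mul_assoc Lᵀ N, hLN, one_mul]

end lowerBlock

end Matrix

open Matrix

abbrev blockEquiv (n : ℕ) : Matrix (Fin n ⊕ Fin n) (Fin n ⊕ Fin n) ℝ ≃ₐ[ℝ]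
    Matrix (Fin (n + n)) (Fin (n + n)) ℝ :=
  reindexAlgEquiv ℝ ℝ finSumFinEquiv

section blockEquiv

variable {n : ℕ} (X : Matrix (Fin n ⊕ Fin n) (Fin n ⊕ Fin n) ℝ)

theorem blk11_blockEquiv : blk11 n (blockEquiv n X) = X.toBlocks₁₁ := by
  ext
  simp only [blk11, toBlocks₁₁, of_apply, coe_reindexAlgEquiv, reindex_apply, submatrix_apply,
    finSumFinEquiv_symm_apply_castAdd]

theorem blk12_blockEquiv : blk12 n (blockEquiv n X) = X.toBlocks₁₂ := by
  ext
  simp only [blk12, toBlocks₁₂, of_apply, coe_reindexAlgEquiv, reindex_apply, submatrix_apply,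
    finSumFinEquiv_symm_apply_castAdd, finSumFinEquiv_symm_apply_natAdd]

theorem blk21_blockEquiv : blk21 n (blockEquiv n X) = X.toBlocks₂₁ := by
  ext
  simp only [blk21, toBlocks₂₁, of_apply, coe_reindexAlgEquiv, reindex_apply, submatrix_apply,
    finSumFinEquiv_symm_apply_castAdd, finSumFinEquiv_symm_apply_natAdd]

theorem blockEquiv_single (i j : Fin n ⊕ Fin n) (c : ℝ) :
    blockEquiv n (single i j c) = single (finSumFinEquiv i) (finSumFinEquiv j) c := by
  ext p q
  simp only [coe_reindexAlgEquiv, reindex_apply, submatrix_apply, single_apply,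
    Equiv.eq_symm_apply]

end blockEquiv

theorem yMat_of_lt {n i : ℕ} (hi : 1 ≤ i) (hin : i < n) (c : ℝ) :
    yMat n i c = blockEquiv n (fromBlocks (transvection ⟨i, hin⟩ ⟨i - 1, by omega⟩ c) 0 0
      (transvection ⟨i - 1, by omega⟩ ⟨i, hin⟩ (-c))) := by
  have h : fromBlocks (transvection (⟨i, hin⟩ : Fin n) ⟨i - 1, by omega⟩ c) 0 0
      (transvection ⟨i - 1, by omega⟩ ⟨i, hin⟩ (-c)) =
      1 + c • (single (.inl ⟨i, hin⟩ : Fin n ⊕ Fin n) (.inl ⟨i - 1, by omega⟩) 1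
        - single (.inr ⟨i - 1, by omega⟩ : Fin n ⊕ Fin n) (.inr ⟨i, hin⟩) 1) := by
    ext (p | p) (q | q) <;> simp [transvection, one_apply, single_apply, sub_eq_add_neg, neg_ite]
  rw [yMat, dif_pos ⟨hi, hin⟩, h, map_add, map_one, map_smul, map_sub, blockEquiv_single,
    blockEquiv_single]
  rfl

theorem yMat_self {n : ℕ} (last : Fin n) (hlast : (last : ℕ) + 1 = n) (c : ℝ) :
    yMat n n c = blockEquiv n (fromBlocks 1 0 (single last last c) 1) := by
  rw [show last = ⟨n - 1, by omega⟩ from Fin.ext (by simp; omega)]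
  have h : fromBlocks 1 0 (single (⟨n - 1, by omega⟩ : Fin n) ⟨n - 1, by omega⟩ c) 1 =
      (1 : Matrix (Fin n ⊕ Fin n) (Fin n ⊕ Fin n) ℝ) +
        c • single (.inr ⟨n - 1, by omega⟩) (.inl ⟨n - 1, by omega⟩) 1 := by
    ext (p | p) (q | q) <;> simp [one_apply, single_apply]
  rw [yMat, dif_neg (by omega), dif_pos ⟨rfl, by omega⟩, h, map_add, map_one, map_smul,
    blockEquiv_single]
  rfl

def ShearsOn {n : ℕ} (L : Matrix (Fin n) (Fin n) ℝ) (b : ℕ → ℝ) (s e : ℕ) : Prop :=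
  ∀ (x : Fin n → ℝ) (k : Fin n),
    (L *ᵥ x) k = x k + if s ≤ k ∧ k < e then b k * x ⟨k - 1, by omega⟩ else 0

theorem shearsOn_one {n : ℕ} (b : ℕ → ℝ) (s : ℕ) :
    ShearsOn (1 : Matrix (Fin n) (Fin n) ℝ) b s s := by
  intro x k
  rw [if_neg (by omega), one_mulVec, add_zero]

theorem ShearsOn.mul_transvection {n s e : ℕ} {L : Matrix (Fin n) (Fin n) ℝ} {b : ℕ → ℝ}
    (hL : ShearsOn L b s e) (hse : s ≤ e) (he : 1 ≤ e) (hen : e < n) :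
    ShearsOn (L * transvection ⟨e, hen⟩ ⟨e - 1, by omega⟩ (b e)) b s (e + 1) := by
  intro x k
  rw [← mulVec_mulVec, hL, transvection_mulVec_apply, transvection_mulVec_apply]
  simp only [Fin.ext_iff]
  split_ifs <;> first | omega | simp_all

theorem prod_yMat_eq_blockEquiv {n s : ℕ} (b : ℕ → ℝ) (hs : 1 ≤ s) :
    ∀ t, s + t ≤ n → ∃ L N : Matrix (Fin n) (Fin n) ℝ,
      ((List.range t).map fun j => yMat n (s + j) (b (s + j))).prod =
        blockEquiv n (fromBlocks L 0 0 N) ∧ Lᵀ * N = 1 ∧ ShearsOn L b s (s + t)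
  | 0, _ => ⟨1, 1, by simp, by simp, shearsOn_one b s⟩
  | t + 1, hst => by
    obtain ⟨L, N, hprod, hLN, hL⟩ := prod_yMat_eq_blockEquiv (n := n) b hs t (by omega)
    let i : Fin n := ⟨s + t, by omega⟩
    let j : Fin n := ⟨s + t - 1, by omega⟩
    have hji : j ≠ i := by simp [i, j, Fin.ext_iff]; omega
    refine ⟨L * transvection i j (b (s + t)), N * transvection j i (-b (s + t)), ?_, ?_,
      hL.mul_transvection (by omega) (by omega) (by omega)⟩
    · rw [List.range_succ, List.map_append, List.prod_append, hprod, List.map_singleton,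
        List.prod_singleton, yMat_of_lt (by omega) (by omega), ← map_mul,
        fromBlocks_lower_mul_lower]
      simp [i, j]
    · rw [transpose_mul, transpose_transvection, mul_assoc, ← mul_assoc Lᵀ, hLN, one_mul,
        transvection_mul_transvection_neg hji]

theorem prod_yMat_group_eq_blockEquiv {n m : ℕ} (b : ℕ → ℝ) (hm : m < n) (last : Fin n)
    (hlast : (last : ℕ) + 1 = n) :
    ∃ L N : Matrix (Fin n) (Fin n) ℝ,
      ((List.range (m + 1)).map fun j => yMat n (n - m + j) (b (n - m + j))).prod =
        blockEquiv n (fromBlocks L 0 (N * single last last (b n)) N) ∧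
      Lᵀ * N = 1 ∧ ShearsOn L b (n - m) n := by
  obtain ⟨L, N, hprod, hLN, hL⟩ :=
    prod_yMat_eq_blockEquiv (n := n) (s := n - m) b (by omega) m (by omega)
  rw [Nat.sub_add_cancel hm.le] at hL
  refine ⟨L, N, ?_, hLN, hL⟩
  rw [List.range_succ, List.map_append, List.prod_append, hprod, List.map_singleton,
    List.prod_singleton, Nat.sub_add_cancel hm.le, yMat_self last hlast, ← map_mul,
    fromBlocks_lower_mul_lower]
  simp

theorem ShearsOn.eq_zero_of_mulVec_eq_zero {n s : ℕ} {L : Matrix (Fin n) (Fin n) ℝ}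
    {b : ℕ → ℝ} (hL : ShearsOn L b s n) (hb : ∀ k : Fin n, s ≤ k → b k ≠ 0)
    {x : Fin n → ℝ}
    (hLx : ∀ k : Fin n, s ≤ k → (L *ᵥ x) k = 0)
    (hlast : ∀ k : Fin n, (k : ℕ) + 1 = n → x k = 0) :
    ∀ k : Fin n, s ≤ k + 1 → x k = 0 := by
  suffices ∀ d (k : Fin n), (k : ℕ) + 1 + d = n → s ≤ k + 1 → x k = 0 from
    fun k hk => this (n - 1 - k) k (by omega) hk
  intro d
  induction d with
  | zero => exact fun k hk _ => hlast k hk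
  | succ d ih =>
    intro k hkd hsk
    have hnext := hLx ⟨k + 1, by omega⟩ hsk
    rw [hL, ih ⟨k + 1, by omega⟩ (by simp; omega) (by simp; omega), if_pos (by simp; omega),
      zero_add] at hnext
    simpa [hb ⟨k + 1, by omega⟩ (by simpa using hsk)] using hnext

theorem posSemidef_conj_add_single {n : ℕ} {S : Matrix (Fin n) (Fin n) ℝ} (hS : S.PosSemidef)
    (L : Matrix (Fin n) (Fin n) ℝ) (k : Fin n) {c : ℝ} (hc : 0 ≤ c) :
    (Lᵀ * S * L + single k k c).PosSemidef := by
  refine (hS.conjTranspose_mul_mul_same L).add ?_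
  rw [← diagonal_single]
  exact PosSemidef.diagonal (Pi.single_nonneg.mpr hc)

theorem eq_zero_of_dotProduct_conj_add_single_eq_zero {n s : ℕ}
    {S L : Matrix (Fin n) (Fin n) ℝ} {b : ℕ → ℝ} {c : ℝ} {last : Fin n}
    (hS : S.PosSemidef)
    (hker : ∀ x, x ⬝ᵥ (S *ᵥ x) = 0 → ∀ k : Fin n, s ≤ k → x k = 0)
    (hL : ShearsOn L b s n) (hb : ∀ k : Fin n, s ≤ k → b k ≠ 0) (hc : 0 < c)
    (hlast : (last : ℕ) + 1 = n) {x : Fin n → ℝ}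
    (hx : x ⬝ᵥ ((Lᵀ * S * L + single last last c) *ᵥ x) = 0) :
    ∀ k : Fin n, s ≤ k + 1 → x k = 0 := by
  have hsplit : x ⬝ᵥ ((Lᵀ * S * L + single last last c) *ᵥ x) =
      (L *ᵥ x) ⬝ᵥ (S *ᵥ (L *ᵥ x)) + c * (x last * x last) := by
    rw [add_mulVec, dotProduct_add, mul_assoc, ← mulVec_mulVec, ← mulVec_mulVec,
      dotProduct_mulVec, vecMul_transpose, single_mulVec]
    simp [dotProduct, Function.update_apply, mul_left_comm]
  have hSx : 0 ≤ (L *ᵥ x) ⬝ᵥ (S *ᵥ (L *ᵥ x)) := by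
    simpa using hS.dotProduct_mulVec_nonneg (L *ᵥ x)
  have hlast_sq : 0 ≤ c * (x last * x last) := mul_nonneg hc.le (mul_self_nonneg _)
  refine hL.eq_zero_of_mulVec_eq_zero hb (hker _ (by linarith)) fun k hk => ?_
  obtain rfl : k = last := Fin.ext (by omega)
  have : c * (x k * x k) = 0 := by linarith
  exact mul_self_eq_zero.mp ((mul_eq_zero.mp this).resolve_left hc.ne')

theorem exists_blocks_prod_groups {n : ℕ} (a : ℕ → ℕ → ℝ)
    (hnz : ∀ p q : ℕ, 1 ≤ q → q ≤ n → n + 1 - q ≤ p → p ≤ n → a p q ≠ 0)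
    (hpos : ∀ q : ℕ, 1 ≤ q → q ≤ n → 0 < a n q) :
    ∀ m ≤ n, ∃ A C D : Matrix (Fin n) (Fin n) ℝ,
      ((List.range m).map fun m' => ((List.range (m' + 1)).map fun j =>
        yMat n (n - m' + j) (a (n - m' + j) (m' + 1))).prod).prod =
        blockEquiv n (fromBlocks A 0 C D) ∧ Aᵀ * D = 1 ∧ (Aᵀ * C).PosSemidef ∧
      ∀ x, x ⬝ᵥ ((Aᵀ * C) *ᵥ x) = 0 → ∀ k : Fin n, n - m ≤ k → x k = 0
  | 0, _ => ⟨1, 0, 1, by simp, by simp, by simp [PosSemidef.zero], fun _ _ k hk => by omega⟩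
  | m + 1, hm => by
    obtain ⟨A, C, D, hprod, hAD, hS, hker⟩ := exists_blocks_prod_groups a hnz hpos m (by omega)
    let last : Fin n := ⟨n - 1, by omega⟩
    obtain ⟨L, N, hgroup, hLN, hL⟩ := prod_yMat_group_eq_blockEquiv (m := m)
      (fun p => a p (m + 1)) (by omega) last (by simp [last]; omega)
    refine ⟨A * L, C * L + D * (N * single last last (a n (m + 1))), D * N, ?_,
      transpose_mul_mul_eq_one hAD hLN, ?_, ?_⟩
    · rw [List.range_succ, List.map_append, List.prod_append, hprod, List.map_singleton,
        List.prod_singleton, hgroup, ← map_mul, fromBlocks_lower_mul_lower]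
    · rw [transpose_mul_add_mul_eq hAD hLN]
      exact posSemidef_conj_add_single hS L _ (hpos (m + 1) (by omega) hm).le
    · rw [transpose_mul_add_mul_eq hAD hLN]
      intro x hx k hk
      exact eq_zero_of_dotProduct_conj_add_single_eq_zero hS hker hL
        (fun k hk => hnz k (m + 1) (by omega) hm (by omega) k.isLt.le)
        (hpos (m + 1) (by omega) hm) (by simp [last]; omega) hx k (by omega)

theorem stmt15_general (n : ℕ) (a : ℕ → ℕ → ℝ)
    (hnz : ∀ p q : ℕ, 1 ≤ q → q ≤ n → n + 1 - q ≤ p → p ≤ n → a p q ≠ 0)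
    (hpos : ∀ q : ℕ, 1 ≤ q → q ≤ n → 0 < a n q) :
    blk12 n (uProd n a) = 0 ∧
    ((blk11 n (uProd n a))ᵀ * blk21 n (uProd n a)).PosDef := by
  obtain ⟨A, C, D, hprod, -, hS, hker⟩ := exists_blocks_prod_groups a hnz hpos n le_rfl
  rw [uProd, hprod, blk11_blockEquiv, blk12_blockEquiv, blk21_blockEquiv, toBlocks_fromBlocks₁₁,
    toBlocks_fromBlocks₁₂, toBlocks_fromBlocks₂₁]
  refine ⟨rfl, posDef_iff_dotProduct_mulVec.mpr ⟨hS.isHermitian, fun x hx => ?_⟩⟩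
  have hnonneg := hS.dotProduct_mulVec_nonneg x
  simp only [star_trivial] at hnonneg ⊢
  exact hnonneg.lt_of_ne fun h => hx (funext fun k => hker x h.symm k (by omega))

theorem stmt15 (n : ℕ) (hn : 2 ≤ n) (a : ℕ → ℕ → ℝ)
    (hnz : ∀ p q : ℕ, 1 ≤ q → q ≤ n → n + 1 - q ≤ p → p ≤ n → a p q ≠ 0)
    (hpos : ∀ q : ℕ, 1 ≤ q → q ≤ n → 0 < a n q) :
    blk12 n (uProd n a) = 0 ∧
    ((blk11 n (uProd n a))ᵀ * blk21 n (uProd n a)).PosDef :=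
  stmt15_general n a hnz hpos
end

section
/- Let n ≥ 2. Suppose given real numbers a_{p,q} for 1 ≤ q ≤ n and n+1−q ≤ p ≤ n, all nonzero. Let u = Π_{q=1}^{n} ( y_{n+1−q}(a_{n+1−q,q}) · y_{n+2−q}(a_{n+2−q,q}) ⋯ y_n(a_{n,q}) ), factors multiplied left to right in the order written, and let u₀ be the product obtained from u by deleting every y_n-factor, i.e., u₀ = Π_{q=2}^{n} ( y_{n+1−q}(a_{n+1−q,q}) ⋯ y_{n−1}(a_{n−1,q}) ). Then u has n×n block form [[A, 0],[C, (Aᵀ)⁻¹]], the upper-left n×n block of u₀ equals A, and C_{p,q} = 0 for all p,q with p + q < n + 1 (1-based indexing). -/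
open Matrix

/-!
Order the indices of `Fin (n + n)` by `level` (`1, …, n`, then `2n, …, n + 1`). Every `y_i(a)`
becomes unipotent lower triangular with its off-diagonal entries on the first subdiagonal, so a
nonzero entry `(r, c)` of a product of such factors is a chain of one-level steps
`c → c + 1 → ⋯ → r` taken from the factors right to left. In a group `y_{n-m} ⋯ y_n` the steps
below level `n` come in descending order, so at most one of them is used, while the steps above
level `n` ascend up to `n + m`. Multiplying the groups one at a time confines `u` to the band
`level c ≤ level r ≤ level c + n`, which misses both the upper-right block and the corner
`p + q < n + 1` of `C`.

The block identities hold because the matrices `[[A, 0], [C, D]]` with `Aᵀ D = 1` form a monoid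
containing every `y_i(a)`, on which `[[A, 0], [C, D]] ↦ A` is multiplicative and kills `y_n(a)`.
-/

namespace Matrix

variable {ι α R : Type*}

def SupportedBy [Zero R] (f : ι → α) (S : α → α → Prop) (M : Matrix ι ι R) : Prop :=
  ∀ i j, M i j ≠ 0 → S (f i) (f j)

namespace SupportedBy

variable {f : ι → α} {S T U : α → α → Prop}

theorem one [DecidableEq ι] [Zero R] [One R] (hS : ∀ x, S x x) :
    SupportedBy f S (1 : Matrix ι ι R) := by
  intro i j h
  obtain rfl : i = j := by_contra fun hij => h (one_apply_ne hij)
  exact hS _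

theorem mul [Fintype ι] [NonUnitalNonAssocSemiring R] {M N : Matrix ι ι R}
    (hM : SupportedBy f S M) (hN : SupportedBy f T N)
    (hSTU : ∀ x y z, S x y → T y z → U x z) : SupportedBy f U (M * N) := by
  intro i k h
  obtain ⟨j, -, hj⟩ := Finset.exists_ne_zero_of_sum_ne_zero h
  exact hSTU _ _ _ (hM i j (left_ne_zero_of_mul hj)) (hN j k (right_ne_zero_of_mul hj))

end SupportedBy

theorem mul_apply_eq_sum_castAdd_add_sum_natAdd [NonUnitalNonAssocSemiring R] {m n : ℕ}
    (P Q : Matrix (Fin (m + n)) (Fin (m + n)) R) (i j : Fin (m + n)) :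
    (P * Q) i j = ∑ k : Fin m, P i (Fin.castAdd n k) * Q (Fin.castAdd n k) j +
      ∑ k : Fin n, P i (Fin.natAdd m k) * Q (Fin.natAdd m k) j := by
  rw [mul_apply, Fin.sum_univ_add]

end Matrix

section

variable {n : ℕ}

def level (n : ℕ) (i : Fin (n + n)) : ℕ := if (i : ℕ) < n then i else n + n + n - 1 - i

theorem supportedBy_yMat (i : ℕ) (a : ℝ) :
    SupportedBy (level n)
      (fun x y => x = y ∨ x = y + 1 ∧ 1 ≤ i ∧ i ≤ n ∧ (x = i ∨ x + i = n + n)) (yMat n i a) := by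
  intro r c h
  have hr := r.isLt
  have hc := c.isLt
  unfold yMat at h
  split_ifs at h with h1 h2 <;>
    simp only [Matrix.add_apply, Matrix.sub_apply, Matrix.smul_apply, one_apply, single_apply,
      Fin.ext_iff, Fin.val_castAdd, Fin.val_natAdd, smul_eq_mul] at h <;>
    unfold level <;> split_ifs at h ⊢ <;> first | omega | simp at h

/-- `yRun n a m k = y_{n-m}(a_{n-m,m+1}) ⋯ y_{n-m+k-1}(a_{n-m+k-1,m+1})`: the `(m+1)`-st group
of `u` is `yRun n a m (m + 1)`, that of `u₀` is `yRun n a m m`. -/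
def yRun (n : ℕ) (a : ℕ → ℕ → ℝ) (m k : ℕ) : Matrix (Fin (n + n)) (Fin (n + n)) ℝ :=
  ((List.range k).map fun j => yMat n (n - m + j) (a (n - m + j) (m + 1))).prod

theorem uProd_eq (a : ℕ → ℕ → ℝ) :
    uProd n a = ((List.range n).map fun m => yRun n a m (m + 1)).prod := rfl

theorem u0Prod_eq (a : ℕ → ℕ → ℝ) :
    u0Prod n a = ((List.range n).map fun m => yRun n a m m).prod := rfl

theorem yRun_succ (a : ℕ → ℕ → ℝ) (m k : ℕ) :
    yRun n a m (k + 1) = yRun n a m k * yMat n (n - m + k) (a (n - m + k) (m + 1)) :=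
  List.prod_range_succ _ _

theorem yRun_succ_self {m : ℕ} (hm : m < n) (a : ℕ → ℕ → ℝ) :
    yRun n a m (m + 1) = yRun n a m m * yMat n n (a n (m + 1)) := by
  rw [yRun_succ, Nat.sub_add_cancel hm.le]

theorem supportedBy_yRun {m k : ℕ} (hm : m < n) (a : ℕ → ℕ → ℝ) :
    SupportedBy (level n) (fun x y => x = y ∨ (x = y + 1 ∧ n - m ≤ x ∧ x < n - m + k) ∨
      (y < x ∧ n + m - k ≤ y ∧ x ≤ n + m)) (yRun n a m k) := by
  induction k with
  | zero => exact SupportedBy.one fun _ => Or.inl rfl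
  | succ k ih =>
    rw [yRun_succ]
    exact ih.mul (supportedBy_yMat _ _) (by intro x y z; omega)

theorem supportedBy_yRun_succ_self {m : ℕ} (hm : m < n) (a : ℕ → ℕ → ℝ) :
    SupportedBy (level n) (fun x y => x = y ∨
      (y < x ∧ n - m ≤ y + 1 ∧ x ≤ n + m ∧ (x = y + 1 ∨ n ≤ y + 1))) (yRun n a m (m + 1)) := by
  rw [yRun_succ_self hm]
  exact (supportedBy_yRun hm a).mul (supportedBy_yMat _ _) (by intro x y z; omega)

theorem supportedBy_prod_yRun {k : ℕ} (hk : k ≤ n) (a : ℕ → ℕ → ℝ) :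
    SupportedBy (level n) (fun x y => y ≤ x ∧ x ≤ y + k ∧ (x = y ∨ x < n + k))
      ((List.range k).map fun m => yRun n a m (m + 1)).prod := by
  induction k with
  | zero => exact SupportedBy.one fun _ => ⟨le_rfl, le_rfl, Or.inl rfl⟩
  | succ k ih =>
    rw [List.prod_range_succ]
    exact (ih (by omega)).mul (supportedBy_yRun_succ_self (by omega) a) (by intro x y z; omega)

theorem blk12_eq_zero_of_supportedBy {M : Matrix (Fin (n + n)) (Fin (n + n)) ℝ}
    {S : ℕ → ℕ → Prop} (hM : SupportedBy (level n) S M) (hS : ∀ x y, S x y → y ≤ x) :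
    blk12 n M = 0 := by
  ext p q
  by_contra h
  have := hS _ _ (hM _ _ h)
  simp only [level, Fin.val_castAdd, Fin.val_natAdd] at this
  split_ifs at this <;> omega

variable {P Q : Matrix (Fin (n + n)) (Fin (n + n)) ℝ}

theorem blk11_mul (hP : blk12 n P = 0) : blk11 n (P * Q) = blk11 n P * blk11 n Q := by
  ext p q
  have hP' (k : Fin n) : P (Fin.castAdd n p) (Fin.natAdd n k) = 0 := congrFun₂ hP p k
  rw [mul_apply]
  simp only [blk11, of_apply, mul_apply_eq_sum_castAdd_add_sum_natAdd, hP', zero_mul,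
    Finset.sum_const_zero, add_zero]

theorem blk22_mul (hQ : blk12 n Q = 0) : blk22 n (P * Q) = blk22 n P * blk22 n Q := by
  ext p q
  have hQ' (k : Fin n) : Q (Fin.castAdd n k) (Fin.natAdd n q) = 0 := congrFun₂ hQ k q
  rw [mul_apply]
  simp only [blk22, of_apply, mul_apply_eq_sum_castAdd_add_sum_natAdd, hQ', mul_zero,
    Finset.sum_const_zero, zero_add]

theorem blk12_mul (hP : blk12 n P = 0) (hQ : blk12 n Q = 0) : blk12 n (P * Q) = 0 := by
  ext p q
  have hP' (k : Fin n) : P (Fin.castAdd n p) (Fin.natAdd n k) = 0 := congrFun₂ hP p k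
  have hQ' (k : Fin n) : Q (Fin.castAdd n k) (Fin.natAdd n q) = 0 := congrFun₂ hQ k q
  simp only [blk12, of_apply, mul_apply_eq_sum_castAdd_add_sum_natAdd, hP', hQ', zero_mul,
    mul_zero, Finset.sum_const_zero, add_zero, Matrix.zero_apply]

theorem blk11_one : blk11 n (1 : Matrix (Fin (n + n)) (Fin (n + n)) ℝ) = 1 := by
  ext p q
  simp [blk11, one_apply]

theorem blk22_one : blk22 n (1 : Matrix (Fin (n + n)) (Fin (n + n)) ℝ) = 1 := by
  ext p q
  simp [blk22, one_apply]

theorem blk12_one : blk12 n (1 : Matrix (Fin (n + n)) (Fin (n + n)) ℝ) = 0 :=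
  blk12_eq_zero_of_supportedBy (S := fun x y => y ≤ x) (SupportedBy.one fun _ => le_rfl)
    fun _ _ h => h

def lowerBlockInvTranspose (n : ℕ) : Submonoid (Matrix (Fin (n + n)) (Fin (n + n)) ℝ) where
  carrier := {M | blk12 n M = 0 ∧ (blk11 n M)ᵀ * blk22 n M = 1}
  one_mem' := ⟨blk12_one, by rw [blk11_one, blk22_one, transpose_one, one_mul]⟩
  mul_mem' := by
    rintro P Q ⟨hP12, hP⟩ ⟨hQ12, hQ⟩
    refine ⟨blk12_mul hP12 hQ12, ?_⟩
    rw [blk11_mul hP12, blk22_mul hQ12, transpose_mul, Matrix.mul_assoc,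
      ← Matrix.mul_assoc (blk11 n P)ᵀ, hP, Matrix.one_mul, hQ]

theorem blk11_yMat {i : ℕ} (h1 : 1 ≤ i) (h2 : i < n) (a : ℝ) :
    blk11 n (yMat n i a) = 1 + a • single (⟨i, h2⟩ : Fin n) ⟨i - 1, by omega⟩ 1 := by
  ext p q
  simp only [blk11, yMat, dif_pos (And.intro h1 h2), of_apply, Matrix.add_apply, Matrix.sub_apply,
    Matrix.smul_apply, one_apply, single_apply, Fin.ext_iff, Fin.val_castAdd, Fin.val_natAdd]
  split_ifs <;> first | omega | simp

theorem blk22_yMat {i : ℕ} (h1 : 1 ≤ i) (h2 : i < n) (a : ℝ) :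
    blk22 n (yMat n i a) = 1 - a • single (⟨i - 1, by omega⟩ : Fin n) ⟨i, h2⟩ 1 := by
  ext p q
  simp only [blk22, yMat, dif_pos (And.intro h1 h2), of_apply, Matrix.add_apply, Matrix.sub_apply,
    Matrix.smul_apply, one_apply, single_apply, Fin.ext_iff, Fin.val_castAdd, Fin.val_natAdd]
  split_ifs <;> first | omega | simp

theorem blk11_yMat_self (a : ℝ) : blk11 n (yMat n n a) = 1 := by
  ext p q
  have := p.isLt
  rw [yMat, dif_neg (by omega), dif_pos ⟨rfl, by omega⟩]
  simp only [blk11, of_apply, Matrix.add_apply, Matrix.smul_apply, one_apply, single_apply,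
    Fin.ext_iff, Fin.val_castAdd, Fin.val_natAdd]
  split_ifs <;> first | omega | simp

theorem blk22_yMat_self (a : ℝ) : blk22 n (yMat n n a) = 1 := by
  ext p q
  have := p.isLt
  rw [yMat, dif_neg (by omega), dif_pos ⟨rfl, by omega⟩]
  simp only [blk22, of_apply, Matrix.add_apply, Matrix.smul_apply, one_apply, single_apply,
    Fin.ext_iff, Fin.val_castAdd, Fin.val_natAdd]
  split_ifs <;> first | omega | simp

theorem yMat_mem_lowerBlockInvTranspose (i : ℕ) (a : ℝ) :
    yMat n i a ∈ lowerBlockInvTranspose n := by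
  refine ⟨blk12_eq_zero_of_supportedBy (supportedBy_yMat i a) (by intro x y; omega), ?_⟩
  by_cases hi : 1 ≤ i ∧ i < n
  · have hne : (⟨i, hi.2⟩ : Fin n) ≠ (⟨i - 1, by omega⟩ : Fin n) :=
      Fin.ne_of_val_ne (by dsimp only; omega)
    rw [blk11_yMat hi.1 hi.2, blk22_yMat hi.1 hi.2, transpose_add, transpose_one,
      transpose_smul, transpose_single]
    set E := single (⟨i - 1, by omega⟩ : Fin n) (⟨i, hi.2⟩ : Fin n) (1 : ℝ)
    have hE : E * E = 0 := single_mul_single_of_ne (c := 1) _ _ _ hne 1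
    rw [add_mul, mul_sub, mul_sub, smul_mul_smul_comm, hE, smul_zero, one_mul, mul_one, one_mul]
    abel
  by_cases hn : i = n
  · subst hn
    rw [blk11_yMat_self, blk22_yMat_self, transpose_one, one_mul]
  · rw [yMat, dif_neg hi, dif_neg (fun h => hn h.1), blk11_one, blk22_one, transpose_one, one_mul]

theorem yRun_mem_lowerBlockInvTranspose (a : ℕ → ℕ → ℝ) (m k : ℕ) :
    yRun n a m k ∈ lowerBlockInvTranspose n :=
  Submonoid.list_prod_mem _ <| by
    simp only [List.mem_map]
    rintro _ ⟨j, -, rfl⟩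
    exact yMat_mem_lowerBlockInvTranspose _ _

theorem mem_lowerBlockInvTranspose_of_mem_map_yRun (a : ℕ → ℕ → ℝ) (k : ℕ → ℕ) :
    ∀ M ∈ (List.range n).map (fun m => yRun n a m (k m)), M ∈ lowerBlockInvTranspose n := by
  simp only [List.mem_map]
  rintro _ ⟨m, -, rfl⟩
  exact yRun_mem_lowerBlockInvTranspose a m _

theorem uProd_mem_lowerBlockInvTranspose (a : ℕ → ℕ → ℝ) :
    uProd n a ∈ lowerBlockInvTranspose n :=
  Submonoid.list_prod_mem _ (mem_lowerBlockInvTranspose_of_mem_map_yRun a _)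

theorem blk11_list_prod {l : List (Matrix (Fin (n + n)) (Fin (n + n)) ℝ)}
    (hl : ∀ M ∈ l, M ∈ lowerBlockInvTranspose n) : blk11 n l.prod = (l.map (blk11 n)).prod := by
  induction l with
  | nil => exact blk11_one
  | cons M l ih =>
    rw [List.prod_cons, List.map_cons, List.prod_cons, blk11_mul (hl M (by simp)).1,
      ih fun N hN => hl N (List.mem_cons_of_mem M hN)]

theorem blk11_yRun_succ_self {m : ℕ} (hm : m < n) (a : ℕ → ℕ → ℝ) :
    blk11 n (yRun n a m (m + 1)) = blk11 n (yRun n a m m) := by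
  rw [yRun_succ_self hm, blk11_mul (yRun_mem_lowerBlockInvTranspose a m m).1, blk11_yMat_self,
    Matrix.mul_one]

theorem blk11_u0Prod (a : ℕ → ℕ → ℝ) : blk11 n (u0Prod n a) = blk11 n (uProd n a) := by
  rw [u0Prod_eq, uProd_eq, blk11_list_prod (mem_lowerBlockInvTranspose_of_mem_map_yRun a _),
    blk11_list_prod (mem_lowerBlockInvTranspose_of_mem_map_yRun a _), List.map_map, List.map_map]
  exact congrArg _ <| List.map_congr_left fun m hm =>
    (blk11_yRun_succ_self (List.mem_range.1 hm) a).symm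

end

theorem stmt16_general (n : ℕ) (a : ℕ → ℕ → ℝ) :
    blk12 n (uProd n a) = 0 ∧
    blk22 n (uProd n a) = ((blk11 n (uProd n a))ᵀ)⁻¹ ∧
    blk11 n (u0Prod n a) = blk11 n (uProd n a) ∧
    ∀ p q : Fin n, (p : ℕ) + 1 + ((q : ℕ) + 1) < n + 1 → blk21 n (uProd n a) p q = 0 := by
  obtain ⟨hB, hAD⟩ := uProd_mem_lowerBlockInvTranspose (n := n) a
  refine ⟨hB, (inv_eq_right_inv hAD).symm, blk11_u0Prod a, fun p q hpq => ?_⟩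
  by_contra hC
  have hband := supportedBy_prod_yRun le_rfl a _ _ hC
  simp only [level, Fin.val_castAdd, Fin.val_natAdd] at hband
  split_ifs at hband <;> omega

theorem stmt16 (n : ℕ) (hn : 2 ≤ n) (a : ℕ → ℕ → ℝ)
    (hnz : ∀ p q : ℕ, 1 ≤ q → q ≤ n → n + 1 - q ≤ p → p ≤ n → a p q ≠ 0) :
    blk12 n (uProd n a) = 0 ∧
    blk22 n (uProd n a) = ((blk11 n (uProd n a))ᵀ)⁻¹ ∧
    blk11 n (u0Prod n a) = blk11 n (uProd n a) ∧
    ∀ p q : Fin n, (p : ℕ) + 1 + ((q : ℕ) + 1) < n + 1 → blk21 n (uProd n a) p q = 0 :=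
  stmt16_general n a
end
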